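/- arXiv:1409.4802 — 11 statements merged into one kernel-verified Lean document; each statement's English description precedes it below -/
import Mathlib

section
/- Let n ≥ 4 and let P be the n×n pentadiagonal matrix over a field F with diagonal entries d₁,…,dₙ, first superdiagonal a₁,…,aₙ₋₁, second superdiagonal b₁,…,bₙ₋₂, first subdiagonal c₂,…,cₙ, second subdiagonal e₃,…,eₙ, and all other entries zero. Define the sequences μ, α, β, γ by μ₁ = d₁, α₁ = a₁/μ₁, β₁ = b₁/μ₁, γ₂ = c₂, μ₂ = d₂ − α₁γ₂, α₂ = (a₂ − β₁γ₂)/μ₂, β₂ = b₂/μ₂, and for i = 3,…,n: γᵢ = cᵢ − αᵢ₋₂eᵢ, μᵢ = dᵢ − βᵢ₋₂eᵢ − αᵢ₋₁γᵢ, and (for i ≤ n−1) αᵢ = (aᵢ − βᵢ₋₁γᵢ)/μᵢ, (for i ≤ n−2) βᵢ = bᵢ/μᵢ. If μᵢ ≠ 0 for all i = 1,…,n, then P = L·U, where L is the lower triangular banded matrix with diagonal entries μ₁,…,μₙ, first subdiagonal entries γ₂,…,γₙ, second subdiagonal entries e₃,…,eₙ, and zeros elsewhere, and U is the unit upper triangular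 banded matrix with ones on the diagonal, first superdiagonal entries α₁,…,αₙ₋₁, second superdiagonal entries β₁,…,βₙ₋₂, and zeros elsewhere. -/
open Matrix

lemma aux_sum {M : Type*} [AddCommMonoid M] {n : ℕ} (g : ℕ → M) (iv : ℕ) (hiv : iv < n)
    (hz : ∀ k, ¬(iv - 2 ≤ k ∧ k ≤ iv) → g k = 0) :
    (∑ k ∈ Finset.range n, g k) = ∑ k ∈ Finset.Icc (iv - 2) iv, g k := by
  refine (Finset.sum_subset (fun k hk => ?_) (fun k hk hk' => ?_)).symm
  · rw [Finset.mem_Icc] at hk; rw [Finset.mem_range]; omega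
  · rw [Finset.mem_Icc] at hk'; exact hz k hk'

theorem stmt_0 {F : Type*} [Field F] (n : ℕ) (hn : 4 ≤ n)
    (d a b c e : ℕ → F)
    (P : Matrix (Fin n) (Fin n) F)
    (hP : ∀ i j : Fin n,
      P i j =
        if (j : ℕ) = (i : ℕ) + 1 then a ((i : ℕ) + 1)
        else if (j : ℕ) = (i : ℕ) + 2 then b ((i : ℕ) + 1)
        else if (i : ℕ) = (j : ℕ) + 1 then c ((i : ℕ) + 1)
        else if (i : ℕ) = (j : ℕ) + 2 then e ((i : ℕ) + 1)
        else if (i : ℕ) = (j : ℕ) then d ((i : ℕ) + 1)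
        else 0)
    (μ α β γ : ℕ → F)
    (hμ1 : μ 1 = d 1) (hα1 : α 1 = a 1 / μ 1) (hβ1 : β 1 = b 1 / μ 1)
    (hγ2 : γ 2 = c 2) (hμ2 : μ 2 = d 2 - α 1 * γ 2)
    (hα2 : α 2 = (a 2 - β 1 * γ 2) / μ 2) (hβ2 : β 2 = b 2 / μ 2)
    (hγ : ∀ i, 3 ≤ i → i ≤ n → γ i = c i - α (i - 2) * e i)
    (hμr : ∀ i, 3 ≤ i → i ≤ n → μ i = d i - β (i - 2) * e i - α (i - 1) * γ i)
    (hαr : ∀ i, 3 ≤ i → i ≤ n - 1 → α i = (a i - β (i - 1) * γ i) / μ i)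
    (hβr : ∀ i, 3 ≤ i → i ≤ n - 2 → β i = b i / μ i)
    (hμne : ∀ i, 1 ≤ i → i ≤ n → μ i ≠ 0)
    (L U : Matrix (Fin n) (Fin n) F)
    (hL : ∀ i j : Fin n,
      L i j =
        if (i : ℕ) = (j : ℕ) then μ ((i : ℕ) + 1)
        else if (i : ℕ) = (j : ℕ) + 1 then γ ((i : ℕ) + 1)
        else if (i : ℕ) = (j : ℕ) + 2 then e ((i : ℕ) + 1)
        else 0)
    (hU : ∀ i j : Fin n,
      U i j =
        if (i : ℕ) = (j : ℕ) then 1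
        else if (j : ℕ) = (i : ℕ) + 1 then α ((i : ℕ) + 1)
        else if (j : ℕ) = (i : ℕ) + 2 then β ((i : ℕ) + 1)
        else 0)
    : P = L * U := by
  ext i j
  have hin : (i : ℕ) < n := i.isLt
  have hjn : (j : ℕ) < n := j.isLt
  rw [hP, Matrix.mul_apply]
  have h1 : (∑ k : Fin n, L i k * U k j)
      = ∑ k ∈ Finset.range n,
        ((if (i:ℕ) = k then μ ((i:ℕ)+1) else if (i:ℕ) = k+1 then γ ((i:ℕ)+1)
          else if (i:ℕ) = k+2 then e ((i:ℕ)+1) else 0) *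
        (if k = (j:ℕ) then (1:F) else if (j:ℕ) = k+1 then α (k+1)
          else if (j:ℕ) = k+2 then β (k+1) else 0)) := by
    rw [← Fin.sum_univ_eq_sum_range]
    exact Finset.sum_congr rfl fun k _ => by rw [hL, hU]
  rw [h1, aux_sum _ _ hin (fun k hk => by
    rw [if_neg (by omega), if_neg (by omega), if_neg (by omega), zero_mul])]
  by_cases h0 : (i : ℕ) = 0
  · rw [h0]
    rw [show (0:ℕ) - 2 = 0 from rfl, Finset.Icc_self, Finset.sum_singleton]
    have hne1 : μ 1 ≠ 0 := hμne 1 le_rfl (by omega)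
    norm_num
    split_ifs <;>
      first
      | (exfalso; omega)
      | (rw [hμ1]; (try ring1); done)
      | (rw [hα1]; field_simp [hne1]; (try ring1); done)
      | (rw [hβ1]; field_simp [hne1]; (try ring1); done)
      | ring1
  · by_cases h1' : (i : ℕ) = 1
    · rw [h1']
      rw [show Finset.Icc (1-2:ℕ) 1 = {0, 1} by decide,
        Finset.sum_insert (by decide), Finset.sum_singleton]
      have hne2 : μ 2 ≠ 0 := hμne 2 (by omega) (by omega)
      norm_num
      split_ifs <;>
        first
        | (exfalso; omega)
        | (rw [hγ2]; (try ring1); done)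
        | (rw [hμ2]; (try ring1); done)
        | (rw [hα2]; field_simp [hne2]; (try ring1); done)
        | (rw [hβ2]; field_simp [hne2]; (try ring1); done)
        | ring1
    · obtain ⟨m, hm⟩ : ∃ m, (i : ℕ) = m + 2 := ⟨(i:ℕ) - 2, by omega⟩
      rw [hm]; rw [hm] at hin
      rw [show m + 2 - 2 = m from rfl]
      have hIcc : ∀ f : ℕ → F, (∑ k ∈ Finset.Icc m (m+2), f k)
          = f m + (f (m+1) + f (m+2)) := by
        intro f
        rw [show Finset.Icc m (m+2) = {m, m+1, m+2} by ext x; simp [Finset.mem_Icc]; omega,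
          Finset.sum_insert (by simp), Finset.sum_insert (by simp), Finset.sum_singleton]
      rw [hIcc]
      simp only [show m+2+1 = m+3 from rfl, show m+1+1 = m+2 from rfl,
        show m+1+2 = m+3 from rfl, show m+2+2 = m+4 from rfl]
      simp only [if_pos (show m+2 = m+2 from rfl),
        if_neg (show ¬(m+2 = m) by omega), if_neg (show ¬(m+2 = m+1) by omega),
        if_neg (show ¬(m+2 = m+3) by omega), if_neg (show ¬(m+2 = m+4) by omega)]
      have hne3 : μ (m+3) ≠ 0 := hμne (m+3) (by omega) (by omega)
      have hγ3 : γ (m+3) = c (m+3) - α (m+1) * e (m+3) := by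
        have h := hγ (m+3) (by omega) (by omega)
        simpa only [show m+3-2 = m+1 from rfl] using h
      have hμ3 : μ (m+3) = d (m+3) - β (m+1) * e (m+3) - α (m+2) * γ (m+3) := by
        have h := hμr (m+3) (by omega) (by omega)
        simpa only [show m+3-2 = m+1 from rfl, show m+3-1 = m+2 from rfl] using h
      by_cases hj0 : (j : ℕ) = m
      · simp only [hj0]; norm_num
      · by_cases hj1 : (j : ℕ) = m + 1
        · simp only [hj1]; norm_num
          rw [hγ3]; ring1
        · by_cases hj2 : (j : ℕ) = m + 2
          · simp only [hj2]; norm_num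
            rw [hμ3]; ring1
          · by_cases hj3 : (j : ℕ) = m + 3
            · simp only [hj3]; norm_num
              rw [hαr (m+3) (by omega) (by omega), show m+3-1 = m+2 from rfl]
              field_simp [hne3]
              try ring1
            · by_cases hj4 : (j : ℕ) = m + 4
              · simp only [hj4]; norm_num
                rw [hβr (m+3) (by omega) (by omega)]
                field_simp [hne3]
                try ring1
              · simp only [if_neg (show ¬(m = (j:ℕ)) by omega),
                  if_neg (show ¬((j:ℕ) = m+1) by omega),
                  if_neg (show ¬((j:ℕ) = m+2) by omega),
                  if_neg (show ¬(m+1 = (j:ℕ)) by omega),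
                  if_neg (show ¬((j:ℕ) = m+3) by omega),
                  if_neg (show ¬(m+2 = (j:ℕ)) by omega),
                  if_neg (show ¬((j:ℕ) = m+4) by omega),
                  if_neg (show ¬(m+2 = (j:ℕ)+1) by omega),
                  if_neg (show ¬(m+2 = (j:ℕ)+2) by omega)]
                ring1
end

section
/- Let n ≥ 4 and let P be the n×n pentadiagonal matrix over a field F with diagonal entries d₁,…,dₙ, first superdiagonal a₁,…,aₙ₋₁, second superdiagonal b₁,…,bₙ₋₂, first subdiagonal c₂,…,cₙ, second subdiagonal e₃,…,eₙ, and all other entries zero. Define μ, α, β, γ by the PTRANS-I recurrences μ₁ = d₁, α₁ = a₁/μ₁, β₁ = b₁/μ₁, γ₂ = c₂, μ₂ = d₂ − α₁γ₂, α₂ = (a₂ − β₁γ₂)/μ₂, β₂ = b₂/μ₂, and for i = 3,…,n: γᵢ = cᵢ − αᵢ₋₂eᵢ, μᵢ = dᵢ − βᵢ₋₂eᵢ − αᵢ₋₁γᵢ, αᵢ = (aᵢ − βᵢ₋₁γᵢ)/μᵢ (i ≤ n−1), βᵢ = bᵢ/μᵢ (i ≤ n−2). Given a right-hand side vector y = (y₁,…,yₙ),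 define z₁ = y₁/μ₁, z₂ = (y₂ − z₁γ₂)/μ₂, and zᵢ = (yᵢ − zᵢ₋₂eᵢ − zᵢ₋₁γᵢ)/μᵢ for i = 3,…,n. If μᵢ ≠ 0 for all i, then a vector x = (x₁,…,xₙ) satisfies P·x = y if and only if it satisfies the transformed unit upper triangular system xᵢ + αᵢxᵢ₊₁ + βᵢxᵢ₊₂ = zᵢ for i = 1,…,n−2, xₙ₋₁ + αₙ₋₁xₙ = zₙ₋₁, and xₙ = zₙ. -/
open Matrix Finset

section Aux
variable {F : Type*} [Field F]

def Rr (n : ℕ) (a b c d e x : ℕ → F) (r : ℕ) : F :=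
  (if 3 ≤ r then e r * x (r - 2) else 0) + (if 2 ≤ r then c r * x (r - 1) else 0)
    + d r * x r + (if r < n then a r * x (r + 1) else 0)
    + (if r + 1 < n then b r * x (r + 2) else 0)

def Tr (n : ℕ) (α β x : ℕ → F) (r : ℕ) : F :=
  if r + 2 ≤ n then x r + α r * x (r + 1) + β r * x (r + 2)
  else if r + 1 = n then x r + α r * x (r + 1)
  else x n

lemma sum_ite_eq_nat (n m : ℕ) (A : ℕ → F) :
    (∑ k ∈ Finset.range n, if m = k then A k else 0) = if m < n then A m else 0 := by
  rw [Finset.sum_ite_eq (Finset.range n) m A]; simp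

lemma sum_ite_eq_nat' (n m : ℕ) (A : ℕ → F) :
    (∑ k ∈ Finset.range n, if k = m then A k else 0) = if m < n then A m else 0 := by
  rw [Finset.sum_ite_eq' (Finset.range n) m A]; simp

lemma sum_ite_eq_sub (n p t : ℕ) (A : ℕ → F) :
    (∑ k ∈ Finset.range n, if p = k + t then A k else 0) =
      if t ≤ p ∧ p - t < n then A (p - t) else 0 := by
  by_cases hc : t ≤ p ∧ p - t < n
  · rw [if_pos hc]
    calc (∑ k ∈ Finset.range n, if p = k + t then A k else 0)
        = ∑ k ∈ Finset.range n, if k = p - t then A k else 0 :=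
          Finset.sum_congr rfl fun k _ => by
            have h : (p = k + t) ↔ (k = p - t) := by omega
            simp only [h]
      _ = if p - t < n then A (p - t) else 0 := sum_ite_eq_nat' n (p - t) A
      _ = A (p - t) := if_pos hc.2
  · rw [if_neg hc]
    refine Finset.sum_eq_zero fun k hk => if_neg ?_
    have := Finset.mem_range.mp hk
    omega

end Aux

section Aux2
variable {F : Type*} [Field F]

lemma row_eval (n : ℕ) (a b c d e : ℕ → F) (P : Matrix (Fin n) (Fin n) F)
    (hP : ∀ i j : Fin n,
      P i j =
        if (j : ℕ) = (i : ℕ) + 1 then a ((i : ℕ) + 1)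
        else if (j : ℕ) = (i : ℕ) + 2 then b ((i : ℕ) + 1)
        else if (i : ℕ) = (j : ℕ) + 1 then c ((i : ℕ) + 1)
        else if (i : ℕ) = (j : ℕ) + 2 then e ((i : ℕ) + 1)
        else if (i : ℕ) = (j : ℕ) then d ((i : ℕ) + 1)
        else 0)
    (x : ℕ → F) (i : Fin n) :
    P.mulVec (fun j : Fin n => x ((j : ℕ) + 1)) i = Rr n a b c d e x ((i : ℕ) + 1) := by
  have hterm : ∀ j : Fin n, P i j * x ((j : ℕ) + 1) =
      (if (i : ℕ) = (j : ℕ) + 2 then e ((i : ℕ) + 1) * x ((j : ℕ) + 1) else 0)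
      + (if (i : ℕ) = (j : ℕ) + 1 then c ((i : ℕ) + 1) * x ((j : ℕ) + 1) else 0)
      + (if (i : ℕ) = (j : ℕ) then d ((i : ℕ) + 1) * x ((j : ℕ) + 1) else 0)
      + (if (j : ℕ) = (i : ℕ) + 1 then a ((i : ℕ) + 1) * x ((j : ℕ) + 1) else 0)
      + (if (j : ℕ) = (i : ℕ) + 2 then b ((i : ℕ) + 1) * x ((j : ℕ) + 1) else 0) := by
    intro j
    rw [hP]
    split_ifs <;> first | ring1 | (exfalso; omega)
  have hp : (i : ℕ) < n := i.isLt
  calc P.mulVec (fun j : Fin n => x ((j : ℕ) + 1)) i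
      = ∑ j : Fin n, P i j * x ((j : ℕ) + 1) := by
        simp [Matrix.mulVec, dotProduct]
    _ = ∑ j : Fin n,
        ((if (i : ℕ) = (j : ℕ) + 2 then e ((i : ℕ) + 1) * x ((j : ℕ) + 1) else 0)
        + (if (i : ℕ) = (j : ℕ) + 1 then c ((i : ℕ) + 1) * x ((j : ℕ) + 1) else 0)
        + (if (i : ℕ) = (j : ℕ) then d ((i : ℕ) + 1) * x ((j : ℕ) + 1) else 0)
        + (if (j : ℕ) = (i : ℕ) + 1 then a ((i : ℕ) + 1) * x ((j : ℕ) + 1) else 0)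
        + (if (j : ℕ) = (i : ℕ) + 2 then b ((i : ℕ) + 1) * x ((j : ℕ) + 1) else 0)) :=
        Finset.sum_congr rfl fun j _ => hterm j
    _ = ∑ k ∈ Finset.range n,
        ((if (i : ℕ) = k + 2 then e ((i : ℕ) + 1) * x (k + 1) else 0)
        + (if (i : ℕ) = k + 1 then c ((i : ℕ) + 1) * x (k + 1) else 0)
        + (if (i : ℕ) = k then d ((i : ℕ) + 1) * x (k + 1) else 0)
        + (if k = (i : ℕ) + 1 then a ((i : ℕ) + 1) * x (k + 1) else 0)
        + (if k = (i : ℕ) + 2 then b ((i : ℕ) + 1) * x (k + 1) else 0)) :=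
        Fin.sum_univ_eq_sum_range (fun k =>
          (if (i : ℕ) = k + 2 then e ((i : ℕ) + 1) * x (k + 1) else 0)
          + (if (i : ℕ) = k + 1 then c ((i : ℕ) + 1) * x (k + 1) else 0)
          + (if (i : ℕ) = k then d ((i : ℕ) + 1) * x (k + 1) else 0)
          + (if k = (i : ℕ) + 1 then a ((i : ℕ) + 1) * x (k + 1) else 0)
          + (if k = (i : ℕ) + 2 then b ((i : ℕ) + 1) * x (k + 1) else 0)) n
    _ = (if 2 ≤ (i : ℕ) ∧ (i : ℕ) - 2 < n then e ((i : ℕ) + 1) * x ((i : ℕ) - 2 + 1) else 0)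
        + (if 1 ≤ (i : ℕ) ∧ (i : ℕ) - 1 < n then c ((i : ℕ) + 1) * x ((i : ℕ) - 1 + 1) else 0)
        + (if (i : ℕ) < n then d ((i : ℕ) + 1) * x ((i : ℕ) + 1) else 0)
        + (if (i : ℕ) + 1 < n then a ((i : ℕ) + 1) * x ((i : ℕ) + 1 + 1) else 0)
        + (if (i : ℕ) + 2 < n then b ((i : ℕ) + 1) * x ((i : ℕ) + 2 + 1) else 0) := by
        rw [Finset.sum_add_distrib, Finset.sum_add_distrib, Finset.sum_add_distrib,
          Finset.sum_add_distrib, sum_ite_eq_sub n _ 2, sum_ite_eq_sub n _ 1,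
          sum_ite_eq_nat, sum_ite_eq_nat', sum_ite_eq_nat']
    _ = Rr n a b c d e x ((i : ℕ) + 1) := by
        unfold Rr
        have h1 : (if 2 ≤ (i : ℕ) ∧ (i : ℕ) - 2 < n then e ((i : ℕ) + 1) * x ((i : ℕ) - 2 + 1) else 0)
            = (if 3 ≤ (i : ℕ) + 1 then e ((i : ℕ) + 1) * x ((i : ℕ) + 1 - 2) else 0) := by
          by_cases h : 2 ≤ (i : ℕ)
          · have hx : (i : ℕ) - 2 + 1 = (i : ℕ) + 1 - 2 := by omega
            rw [hx, if_pos (show 2 ≤ (i : ℕ) ∧ (i : ℕ) - 2 < n from ⟨h, by omega⟩),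
              if_pos (show 3 ≤ (i : ℕ) + 1 by omega)]
          · rw [if_neg (show ¬(2 ≤ (i : ℕ) ∧ (i : ℕ) - 2 < n) by omega),
              if_neg (show ¬3 ≤ (i : ℕ) + 1 by omega)]
        have h2 : (if 1 ≤ (i : ℕ) ∧ (i : ℕ) - 1 < n then c ((i : ℕ) + 1) * x ((i : ℕ) - 1 + 1) else 0)
            = (if 2 ≤ (i : ℕ) + 1 then c ((i : ℕ) + 1) * x ((i : ℕ) + 1 - 1) else 0) := by
          by_cases h : 1 ≤ (i : ℕ)
          · have hx : (i : ℕ) - 1 + 1 = (i : ℕ) + 1 - 1 := by omega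
            rw [hx, if_pos (show 1 ≤ (i : ℕ) ∧ (i : ℕ) - 1 < n from ⟨h, by omega⟩),
              if_pos (show 2 ≤ (i : ℕ) + 1 by omega)]
          · rw [if_neg (show ¬(1 ≤ (i : ℕ) ∧ (i : ℕ) - 1 < n) by omega),
              if_neg (show ¬2 ≤ (i : ℕ) + 1 by omega)]
        have h3 : (if (i : ℕ) < n then d ((i : ℕ) + 1) * x ((i : ℕ) + 1) else 0)
            = d ((i : ℕ) + 1) * x ((i : ℕ) + 1) := if_pos hp
        have h5 : (if (i : ℕ) + 2 < n then b ((i : ℕ) + 1) * x ((i : ℕ) + 2 + 1) else 0)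
            = (if (i : ℕ) + 1 + 1 < n then b ((i : ℕ) + 1) * x ((i : ℕ) + 1 + 2) else 0) := by
          have hx : (i : ℕ) + 2 + 1 = (i : ℕ) + 1 + 2 := by omega
          rw [hx]
        rw [h1, h2, h3, h5]

end Aux2

lemma mul_div_self'' {F : Type*} [Field F] (u v : F) (h : v ≠ 0) : v * (u / v) = u := by
  field_simp

theorem stmt_1 {F : Type*} [Field F] (n : ℕ) (hn : 4 ≤ n)
    (d a b c e : ℕ → F)
    (P : Matrix (Fin n) (Fin n) F)
    (hP : ∀ i j : Fin n,
      P i j =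
        if (j : ℕ) = (i : ℕ) + 1 then a ((i : ℕ) + 1)
        else if (j : ℕ) = (i : ℕ) + 2 then b ((i : ℕ) + 1)
        else if (i : ℕ) = (j : ℕ) + 1 then c ((i : ℕ) + 1)
        else if (i : ℕ) = (j : ℕ) + 2 then e ((i : ℕ) + 1)
        else if (i : ℕ) = (j : ℕ) then d ((i : ℕ) + 1)
        else 0)
    (μ α β γ : ℕ → F)
    (hμ1 : μ 1 = d 1) (hα1 : α 1 = a 1 / μ 1) (hβ1 : β 1 = b 1 / μ 1)
    (hγ2 : γ 2 = c 2) (hμ2 : μ 2 = d 2 - α 1 * γ 2)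
    (hα2 : α 2 = (a 2 - β 1 * γ 2) / μ 2) (hβ2 : β 2 = b 2 / μ 2)
    (hγ : ∀ i, 3 ≤ i → i ≤ n → γ i = c i - α (i - 2) * e i)
    (hμr : ∀ i, 3 ≤ i → i ≤ n → μ i = d i - β (i - 2) * e i - α (i - 1) * γ i)
    (hαr : ∀ i, 3 ≤ i → i ≤ n - 1 → α i = (a i - β (i - 1) * γ i) / μ i)
    (hβr : ∀ i, 3 ≤ i → i ≤ n - 2 → β i = b i / μ i)
    (y z : ℕ → F)
    (hz1 : z 1 = y 1 / μ 1) (hz2 : z 2 = (y 2 - z 1 * γ 2) / μ 2)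
    (hzr : ∀ i, 3 ≤ i → i ≤ n → z i = (y i - z (i - 2) * e i - z (i - 1) * γ i) / μ i)
    (hμne : ∀ i, 1 ≤ i → i ≤ n → μ i ≠ 0)
    (x : ℕ → F) :
    (P.mulVec (fun i : Fin n => x ((i : ℕ) + 1)) = fun i : Fin n => y ((i : ℕ) + 1)) ↔
      ((∀ i, 1 ≤ i → i ≤ n - 2 → x i + α i * x (i + 1) + β i * x (i + 2) = z i) ∧
       x (n - 1) + α (n - 1) * x n = z (n - 1) ∧ x n = z n) := by
  have hμ1' : μ 1 ≠ 0 := hμne 1 (by omega) (by omega)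
  have hμ2' : μ 2 ≠ 0 := hμne 2 (by omega) (by omega)
  -- the key row identity, LHS side
  have hRT : ∀ r, 1 ≤ r → r ≤ n →
      Rr n a b c d e x r =
        (if 3 ≤ r then e r * Tr n α β x (r - 2) else 0)
        + (if 2 ≤ r then γ r * Tr n α β x (r - 1) else 0) + μ r * Tr n α β x r := by
    intro r h1 h2
    obtain ⟨m, rfl⟩ : ∃ m, n = m + 4 := ⟨n - 4, by omega⟩
    rcases (by omega : r = 1 ∨ r = 2 ∨ (3 ≤ r ∧ r ≤ m + 2) ∨ r = m + 3 ∨ r = m + 4)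
      with hr | hr | hr | hr | hr
    · subst hr
      have hA1 : μ 1 * α 1 = a 1 := by rw [hα1, mul_div_self'' _ _ hμ1']
      have hB1 : μ 1 * β 1 = b 1 := by rw [hβ1, mul_div_self'' _ _ hμ1']
      have T1 : Tr (m + 4) α β x 1 = x 1 + α 1 * x 2 + β 1 * x 3 := by
        simp only [Tr]; rw [if_pos (by omega : 1 + 2 ≤ m + 4)]
      simp only [Rr]
      rw [T1, if_neg (by omega : ¬3 ≤ 1), if_neg (by omega : ¬3 ≤ 1),
        if_neg (by omega : ¬2 ≤ 1), if_neg (by omega : ¬2 ≤ 1),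
        if_pos (by omega : 1 < m + 4), if_pos (by omega : 1 + 1 < m + 4)]
      norm_num
      linear_combination (-(x 1)) * hμ1 - x 2 * hA1 - x 3 * hB1
    · subst hr
      have hA2 : μ 2 * α 2 = a 2 - β 1 * γ 2 := by rw [hα2, mul_div_self'' _ _ hμ2']
      have hB2 : μ 2 * β 2 = b 2 := by rw [hβ2, mul_div_self'' _ _ hμ2']
      have T1 : Tr (m + 4) α β x 1 = x 1 + α 1 * x 2 + β 1 * x 3 := by
        simp only [Tr]; rw [if_pos (by omega : 1 + 2 ≤ m + 4)]
      have T2 : Tr (m + 4) α β x 2 = x 2 + α 2 * x 3 + β 2 * x 4 := by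
        simp only [Tr]; rw [if_pos (by omega : 2 + 2 ≤ m + 4)]
      simp only [Rr]
      rw [show (2 : ℕ) - 1 = 1 by norm_num, T1, T2,
        if_neg (by omega : ¬3 ≤ 2), if_neg (by omega : ¬3 ≤ 2),
        if_pos (by omega : 2 ≤ 2), if_pos (by omega : 2 ≤ 2),
        if_pos (by omega : 2 < m + 4), if_pos (by omega : 2 + 1 < m + 4)]
      norm_num
      linear_combination (-(x 1)) * hγ2 - x 2 * hμ2 - x 3 * hA2 - x 4 * hB2
    · obtain ⟨s, rfl⟩ : ∃ s, r = s + 3 := ⟨r - 3, by omega⟩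
      have hμ' : μ (s + 3) ≠ 0 := hμne (s + 3) (by omega) (by omega)
      have h32 : s + 3 - 2 = s + 1 := by omega
      have h31 : s + 3 - 1 = s + 2 := by omega
      have hγ' := hγ (s + 3) (by omega) (by omega)
      have hμr' := hμr (s + 3) (by omega) (by omega)
      have hα' := hαr (s + 3) (by omega) (by omega)
      have hβ' := hβr (s + 3) (by omega) (by omega)
      rw [h32] at hγ' hμr'
      rw [h31] at hμr' hα'
      have hA : μ (s + 3) * α (s + 3) = a (s + 3) - β (s + 2) * γ (s + 3) := by
        rw [hα', mul_div_self'' _ _ hμ']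
      have hB : μ (s + 3) * β (s + 3) = b (s + 3) := by
        rw [hβ', mul_div_self'' _ _ hμ']
      have Ta : Tr (m + 4) α β x (s + 1) = x (s + 1) + α (s + 1) * x (s + 2) + β (s + 1) * x (s + 3) := by
        simp only [Tr]; rw [if_pos (by omega : s + 1 + 2 ≤ m + 4)]
      have Tb : Tr (m + 4) α β x (s + 2) = x (s + 2) + α (s + 2) * x (s + 3) + β (s + 2) * x (s + 4) := by
        simp only [Tr]; rw [if_pos (by omega : s + 2 + 2 ≤ m + 4)]
      have Tc : Tr (m + 4) α β x (s + 3) = x (s + 3) + α (s + 3) * x (s + 4) + β (s + 3) * x (s + 5) := by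
        simp only [Tr]; rw [if_pos (by omega : s + 3 + 2 ≤ m + 4)]
      simp only [Rr]
      rw [h32, h31, Ta, Tb, Tc,
        if_pos (by omega : 3 ≤ s + 3), if_pos (by omega : 3 ≤ s + 3),
        if_pos (by omega : 2 ≤ s + 3), if_pos (by omega : 2 ≤ s + 3),
        if_pos (by omega : s + 3 < m + 4), if_pos (by omega : s + 3 + 1 < m + 4)]
      simp only [show s + 3 + 1 = s + 4 by omega, show s + 3 + 2 = s + 5 by omega]
      linear_combination (-(x (s + 2))) * hγ' - x (s + 3) * hμr'
        - x (s + 4) * hA - x (s + 5) * hB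
    · subst hr
      have hμ' : μ (m + 3) ≠ 0 := hμne (m + 3) (by omega) (by omega)
      have h32 : m + 3 - 2 = m + 1 := by omega
      have h31 : m + 3 - 1 = m + 2 := by omega
      have hγ' := hγ (m + 3) (by omega) (by omega)
      have hμr' := hμr (m + 3) (by omega) (by omega)
      have hα' := hαr (m + 3) (by omega) (by omega)
      rw [h32] at hγ' hμr'
      rw [h31] at hμr' hα'
      have hA : μ (m + 3) * α (m + 3) = a (m + 3) - β (m + 2) * γ (m + 3) := by
        rw [hα', mul_div_self'' _ _ hμ']
      have Ta : Tr (m + 4) α β x (m + 1) = x (m + 1) + α (m + 1) * x (m + 2) + β (m + 1) * x (m + 3) := by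
        simp only [Tr]; rw [if_pos (by omega : m + 1 + 2 ≤ m + 4)]
      have Tb : Tr (m + 4) α β x (m + 2) = x (m + 2) + α (m + 2) * x (m + 3) + β (m + 2) * x (m + 4) := by
        simp only [Tr]; rw [if_pos (by omega : m + 2 + 2 ≤ m + 4)]
      have Tc : Tr (m + 4) α β x (m + 3) = x (m + 3) + α (m + 3) * x (m + 4) := by
        simp only [Tr, show m + 3 + 1 = m + 4 by omega]
        rw [if_neg (by omega : ¬(m + 3 + 2 ≤ m + 4))]; simp
      simp only [Rr]
      rw [h32, h31, Ta, Tb, Tc,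
        if_pos (by omega : 3 ≤ m + 3), if_pos (by omega : 3 ≤ m + 3),
        if_pos (by omega : 2 ≤ m + 3), if_pos (by omega : 2 ≤ m + 3),
        if_pos (by omega : m + 3 < m + 4), if_neg (by omega : ¬(m + 3 + 1 < m + 4))]
      simp only [show m + 3 + 1 = m + 4 by omega]
      linear_combination (-(x (m + 2))) * hγ' - x (m + 3) * hμr' - x (m + 4) * hA
    · subst hr
      have h32 : m + 4 - 2 = m + 2 := by omega
      have h31 : m + 4 - 1 = m + 3 := by omega
      have hγ' := hγ (m + 4) (by omega) (by omega)
      have hμr' := hμr (m + 4) (by omega) (by omega)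
      rw [h32] at hγ' hμr'
      rw [h31] at hμr'
      have Tb : Tr (m + 4) α β x (m + 2) = x (m + 2) + α (m + 2) * x (m + 3) + β (m + 2) * x (m + 4) := by
        simp only [Tr]; rw [if_pos (by omega : m + 2 + 2 ≤ m + 4)]
      have Tc : Tr (m + 4) α β x (m + 3) = x (m + 3) + α (m + 3) * x (m + 4) := by
        simp only [Tr, show m + 3 + 1 = m + 4 by omega]
        rw [if_neg (by omega : ¬(m + 3 + 2 ≤ m + 4))]; simp
      have Td : Tr (m + 4) α β x (m + 4) = x (m + 4) := by
        simp only [Tr]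
        rw [if_neg (by omega : ¬(m + 4 + 2 ≤ m + 4)), if_neg (by omega : ¬(m + 4 + 1 = m + 4))]
      simp only [Rr]
      rw [h32, h31, Tb, Tc, Td,
        if_pos (by omega : 3 ≤ m + 4), if_pos (by omega : 3 ≤ m + 4),
        if_pos (by omega : 2 ≤ m + 4), if_pos (by omega : 2 ≤ m + 4),
        if_neg (by omega : ¬(m + 4 < m + 4)), if_neg (by omega : ¬(m + 4 + 1 < m + 4))]
      linear_combination (-(x (m + 3))) * hγ' - x (m + 4) * hμr'
  -- the key row identity, RHS side
  have hyz : ∀ r, 1 ≤ r → r ≤ n →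
      y r = (if 3 ≤ r then e r * z (r - 2) else 0)
        + (if 2 ≤ r then γ r * z (r - 1) else 0) + μ r * z r := by
    intro r h1 h2
    rcases (by omega : r = 1 ∨ r = 2 ∨ 3 ≤ r) with hr | hr | hr
    · subst hr
      rw [if_neg (by omega), if_neg (by omega), hz1, mul_div_self'' _ _ hμ1']
      ring
    · subst hr
      rw [if_neg (by omega), if_pos (by omega), hz2, mul_div_self'' _ _ hμ2']
      ring
    · have hμ' : μ r ≠ 0 := hμne r h1 h2
      rw [if_pos hr, if_pos (by omega), hzr r hr h2, mul_div_self'' _ _ hμ']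
      ring
  -- equivalence of the two "all rows" statements
  have key : (∀ r, 1 ≤ r → r ≤ n → Rr n a b c d e x r = y r) ↔
      (∀ r, 1 ≤ r → r ≤ n → Tr n α β x r = z r) := by
    constructor
    · intro H r
      induction r using Nat.strong_induction_on with
      | _ r ih =>
        intro h1 h2
        have hR := H r h1 h2
        rw [hRT r h1 h2, hyz r h1 h2] at hR
        have e1 : (if 3 ≤ r then e r * Tr n α β x (r - 2) else 0)
            = (if 3 ≤ r then e r * z (r - 2) else 0) := by
          split_ifs with h
          · rw [ih (r - 2) (by omega) (by omega) (by omega)]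
          · rfl
        have e2 : (if 2 ≤ r then γ r * Tr n α β x (r - 1) else 0)
            = (if 2 ≤ r then γ r * z (r - 1) else 0) := by
          split_ifs with h
          · rw [ih (r - 1) (by omega) (by omega) (by omega)]
          · rfl
        rw [e1, e2] at hR
        exact mul_left_cancel₀ (hμne r h1 h2) (add_left_cancel hR)
    · intro H r h1 h2
      rw [hRT r h1 h2, hyz r h1 h2]
      have e1 : (if 3 ≤ r then e r * Tr n α β x (r - 2) else 0)
          = (if 3 ≤ r then e r * z (r - 2) else 0) := by
        split_ifs with h
        · rw [H (r - 2) (by omega) (by omega)]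
        · rfl
      have e2 : (if 2 ≤ r then γ r * Tr n α β x (r - 1) else 0)
          = (if 2 ≤ r then γ r * z (r - 1) else 0) := by
        split_ifs with h
        · rw [H (r - 1) (by omega) (by omega)]
        · rfl
      rw [e1, e2, H r h1 h2]
  -- left end
  have left : (P.mulVec (fun i : Fin n => x ((i : ℕ) + 1)) = fun i : Fin n => y ((i : ℕ) + 1))
      ↔ (∀ r, 1 ≤ r → r ≤ n → Rr n a b c d e x r = y r) := by
    constructor
    · intro h r h1 h2
      have h0 := congrFun h (⟨r - 1, by omega⟩ : Fin n)
      rw [row_eval n a b c d e P hP x] at h0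
      have h0' : Rr n a b c d e x (r - 1 + 1) = y (r - 1 + 1) := h0
      rw [show r - 1 + 1 = r by omega] at h0'
      exact h0'
    · intro H
      funext i
      rw [row_eval n a b c d e P hP x i]
      have hi := i.isLt
      exact H ((i : ℕ) + 1) (by omega) (by omega)
  -- right end
  have right : (∀ r, 1 ≤ r → r ≤ n → Tr n α β x r = z r) ↔
      ((∀ i, 1 ≤ i → i ≤ n - 2 → x i + α i * x (i + 1) + β i * x (i + 2) = z i) ∧
       x (n - 1) + α (n - 1) * x n = z (n - 1) ∧ x n = z n) := by
    constructor
    · intro H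
      refine ⟨fun i h1 h2 => ?_, ?_, ?_⟩
      · have h0 := H i h1 (by omega)
        simp only [Tr] at h0
        rw [if_pos (by omega : i + 2 ≤ n)] at h0
        exact h0
      · have h0 := H (n - 1) (by omega) (by omega)
        simp only [Tr] at h0
        rw [if_neg (by omega : ¬(n - 1 + 2 ≤ n)), if_pos (by omega : n - 1 + 1 = n)] at h0
        rw [show n - 1 + 1 = n by omega] at h0
        exact h0
      · have h0 := H n (by omega) (by omega)
        simp only [Tr] at h0
        rw [if_neg (by omega : ¬(n + 2 ≤ n)), if_neg (by omega : ¬(n + 1 = n))] at h0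
        exact h0
    · rintro ⟨H1, H2, H3⟩ r h1 h2
      simp only [Tr]
      by_cases hc : r + 2 ≤ n
      · rw [if_pos hc]
        exact H1 r h1 (by omega)
      · rw [if_neg hc]
        by_cases hc2 : r + 1 = n
        · rw [if_pos hc2]
          have h0 : x (n - 1) + α (n - 1) * x n = z (n - 1) := H2
          rw [show n = r + 1 from hc2.symm] at h0
          rw [show r + 1 - 1 = r by omega] at h0
          exact h0
        · rw [if_neg hc2]
          rw [show r = n by omega]
          exact H3
  exact left.trans (key.trans right)
end

section
/- Let n ≥ 4 and let P be the n×n pentadiagonal matrix over a field F with diagonal entries d₁,…,dₙ, first superdiagonal a₁,…,aₙ₋₁, second superdiagonal b₁,…,bₙ₋₂, first subdiagonal c₂,…,cₙ, second subdiagonal e₃,…,eₙ, and all other entries zero. Define μ, α, β, γ, z by the PTRANS-I recurrences (μ₁ = d₁, α₁ = a₁/μ₁, β₁ = b₁/μ₁, γ₂ = c₂, μ₂ = d₂ − α₁γ₂, α₂ = (a₂ − β₁γ₂)/μ₂, β₂ = b₂/μ₂; for i = 3,…,n: γᵢ = cᵢ − αᵢ₋₂eᵢ, μᵢ = dᵢ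 − βᵢ₋₂eᵢ − αᵢ₋₁γᵢ, αᵢ = (aᵢ − βᵢ₋₁γᵢ)/μᵢ for i ≤ n−1, βᵢ = bᵢ/μᵢ for i ≤ n−2; z₁ = y₁/μ₁, z₂ = (y₂ − z₁γ₂)/μ₂, zᵢ = (yᵢ − zᵢ₋₂eᵢ − zᵢ₋₁γᵢ)/μᵢ for i = 3,…,n) and suppose μᵢ ≠ 0 for all i. Then the vector x defined by backward substitution xₙ = zₙ, xₙ₋₁ = zₙ₋₁ − αₙ₋₁xₙ, and xᵢ = zᵢ − αᵢxᵢ₊₁ − βᵢxᵢ₊₂ for i = n−2,…,1 satisfies P·x = y. -/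
open Matrix

lemma sumInd1 {F : Type*} [AddCommMonoid F] {n : ℕ} (m : ℕ) (v : F) :
    ∑ j : Fin n, (if (j : ℕ) = m then v else 0) = if m < n then v else 0 := by
  by_cases h : m < n
  · rw [if_pos h, Finset.sum_eq_single (⟨m, h⟩ : Fin n)]
    · simp
    · intro j _ hj
      rw [if_neg]
      exact fun hc => hj (Fin.ext hc)
    · simp
  · rw [if_neg h]
    apply Finset.sum_eq_zero
    intro j _
    rw [if_neg]
    exact fun hc => h (hc ▸ j.isLt)

lemma sumInd2 {F : Type*} [AddCommMonoid F] {n : ℕ} (m s : ℕ) (hm : m < n) (v : F) :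
    ∑ j : Fin n, (if m = (j : ℕ) + s then v else 0) = if s ≤ m then v else 0 := by
  by_cases h : s ≤ m
  · rw [if_pos h, Finset.sum_eq_single (⟨m - s, by omega⟩ : Fin n)]
    · rw [if_pos (by simp only [Fin.val_mk]; omega)]
    · intro j _ hj
      rw [if_neg]
      intro hc
      refine hj (Fin.ext ?_)
      simp only [Fin.val_mk]
      omega
    · simp
  · rw [if_neg h]
    apply Finset.sum_eq_zero
    intro j _
    rw [if_neg]
    omega

lemma rowsum {F : Type*} [Field F] {n : ℕ} (d a b c e : ℕ → F)
    (P : Matrix (Fin n) (Fin n) F)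
    (hP : ∀ i j : Fin n,
      P i j =
        if (j : ℕ) = (i : ℕ) + 1 then a ((i : ℕ) + 1)
        else if (j : ℕ) = (i : ℕ) + 2 then b ((i : ℕ) + 1)
        else if (i : ℕ) = (j : ℕ) + 1 then c ((i : ℕ) + 1)
        else if (i : ℕ) = (j : ℕ) + 2 then e ((i : ℕ) + 1)
        else if (i : ℕ) = (j : ℕ) then d ((i : ℕ) + 1)
        else 0)
    (x : ℕ → F) (i : Fin n) :
    ∑ j : Fin n, P i j * x ((j : ℕ) + 1) =
      (if (i : ℕ) + 1 < n then a ((i : ℕ) + 1) * x ((i : ℕ) + 2) else 0)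
      + (if (i : ℕ) + 2 < n then b ((i : ℕ) + 1) * x ((i : ℕ) + 3) else 0)
      + (if 1 ≤ (i : ℕ) then c ((i : ℕ) + 1) * x (i : ℕ) else 0)
      + (if 2 ≤ (i : ℕ) then e ((i : ℕ) + 1) * x ((i : ℕ) - 1) else 0)
      + d ((i : ℕ) + 1) * x ((i : ℕ) + 1) := by
  have key : ∀ j : Fin n, P i j * x ((j : ℕ) + 1) =
      (if (j : ℕ) = (i : ℕ) + 1 then a ((i : ℕ) + 1) * x ((i : ℕ) + 2) else 0)
      + (if (j : ℕ) = (i : ℕ) + 2 then b ((i : ℕ) + 1) * x ((i : ℕ) + 3) else 0)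
      + (if (i : ℕ) = (j : ℕ) + 1 then c ((i : ℕ) + 1) * x (i : ℕ) else 0)
      + (if (i : ℕ) = (j : ℕ) + 2 then e ((i : ℕ) + 1) * x ((i : ℕ) - 1) else 0)
      + (if (j : ℕ) = (i : ℕ) then d ((i : ℕ) + 1) * x ((i : ℕ) + 1) else 0) := by
    intro j
    rw [hP]
    split_ifs <;>
      first
        | (exfalso; omega)
        | (simp only [add_zero, zero_add, zero_mul];
           try first
             | rfl
             | (congr 2 <;> omega))
  rw [Finset.sum_congr rfl (fun j _ => key j)]
  rw [Finset.sum_add_distrib, Finset.sum_add_distrib, Finset.sum_add_distrib,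
    Finset.sum_add_distrib, sumInd1, sumInd1, sumInd1, sumInd2 _ _ i.isLt,
    sumInd2 _ _ i.isLt, if_pos i.isLt]

theorem stmt_2 {F : Type*} [Field F] (n : ℕ) (hn : 4 ≤ n)
    (d a b c e : ℕ → F)
    (P : Matrix (Fin n) (Fin n) F)
    (hP : ∀ i j : Fin n,
      P i j =
        if (j : ℕ) = (i : ℕ) + 1 then a ((i : ℕ) + 1)
        else if (j : ℕ) = (i : ℕ) + 2 then b ((i : ℕ) + 1)
        else if (i : ℕ) = (j : ℕ) + 1 then c ((i : ℕ) + 1)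
        else if (i : ℕ) = (j : ℕ) + 2 then e ((i : ℕ) + 1)
        else if (i : ℕ) = (j : ℕ) then d ((i : ℕ) + 1)
        else 0)
    (μ α β γ : ℕ → F)
    (hμ1 : μ 1 = d 1) (hα1 : α 1 = a 1 / μ 1) (hβ1 : β 1 = b 1 / μ 1)
    (hγ2 : γ 2 = c 2) (hμ2 : μ 2 = d 2 - α 1 * γ 2)
    (hα2 : α 2 = (a 2 - β 1 * γ 2) / μ 2) (hβ2 : β 2 = b 2 / μ 2)
    (hγ : ∀ i, 3 ≤ i → i ≤ n → γ i = c i - α (i - 2) * e i)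
    (hμr : ∀ i, 3 ≤ i → i ≤ n → μ i = d i - β (i - 2) * e i - α (i - 1) * γ i)
    (hαr : ∀ i, 3 ≤ i → i ≤ n - 1 → α i = (a i - β (i - 1) * γ i) / μ i)
    (hβr : ∀ i, 3 ≤ i → i ≤ n - 2 → β i = b i / μ i)
    (y z : ℕ → F)
    (hz1 : z 1 = y 1 / μ 1) (hz2 : z 2 = (y 2 - z 1 * γ 2) / μ 2)
    (hzr : ∀ i, 3 ≤ i → i ≤ n → z i = (y i - z (i - 2) * e i - z (i - 1) * γ i) / μ i)
    (hμne : ∀ i, 1 ≤ i → i ≤ n → μ i ≠ 0)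
    (x : ℕ → F)
    (hxn : x n = z n) (hxn1 : x (n - 1) = z (n - 1) - α (n - 1) * x n)
    (hxr : ∀ i, 1 ≤ i → i ≤ n - 2 → x i = z i - α i * x (i + 1) - β i * x (i + 2)) :
    P.mulVec (fun i : Fin n => x ((i : ℕ) + 1)) = fun i : Fin n => y ((i : ℕ) + 1) := by
  obtain ⟨m, rfl⟩ : ∃ m, n = m + 4 := ⟨n - 4, by omega⟩
  funext i
  simp only [Matrix.mulVec, dotProduct]
  rw [rowsum d a b c e P hP x i]
  have hisLt := i.isLt
  try rw [show m + 4 - 1 = m + 3 from by omega] at hxn1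
  by_cases h0 : (i : ℕ) = 0
  · rw [h0]
    rw [if_pos (by omega), if_pos (by omega), if_neg (by omega), if_neg (by omega)]
    norm_num
    have hne := hμne 1 (by omega) (by omega)
    rw [eq_div_iff hne] at hα1 hβ1 hz1
    have hx1 := hxr 1 (by omega) (by omega)
    linear_combination μ 1 * hx1 + hz1 - x 2 * hα1 - x 3 * hβ1 - x 1 * hμ1
  · by_cases h1 : (i : ℕ) = 1
    · rw [h1]
      rw [if_pos (by omega), if_pos (by omega), if_pos (by omega), if_neg (by omega)]
      norm_num
      have hne := hμne 2 (by omega) (by omega)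
      rw [eq_div_iff hne] at hα2 hβ2 hz2
      have hx1 := hxr 1 (by omega) (by omega)
      have hx2 := hxr 2 (by omega) (by omega)
      linear_combination γ 2 * hx1 + μ 2 * hx2 + hz2 - x 3 * hα2 - x 4 * hβ2
        - x 1 * hγ2 - x 2 * hμ2
    · by_cases hl : (i : ℕ) = m + 3
      · rw [hl]
        rw [if_neg (by omega), if_neg (by omega), if_pos (by omega), if_pos (by omega)]
        try rw [show m + 3 - 1 = m + 2 from by omega]
        try rw [show m + 3 + 1 = m + 4 from by omega]
        have hne := hμne (m + 4) (by omega) (by omega)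
        have hc := hγ (m + 4) (by omega) (by omega)
        have hd := hμr (m + 4) (by omega) (by omega)
        have hz := hzr (m + 4) (by omega) (by omega)
        try rw [show m + 4 - 2 = m + 2 from by omega] at hc
        try rw [show m + 4 - 2 = m + 2 from by omega] at hd
        try rw [show m + 4 - 2 = m + 2 from by omega] at hz
        try rw [show m + 4 - 1 = m + 3 from by omega] at hc
        try rw [show m + 4 - 1 = m + 3 from by omega] at hd
        try rw [show m + 4 - 1 = m + 3 from by omega] at hz
        rw [eq_div_iff hne] at hz
        have hx1 := hxr (m + 2) (by omega) (by omega)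
        linear_combination e (m + 4) * hx1 + γ (m + 4) * hxn1 + μ (m + 4) * hxn + hz
          - x (m + 3) * hc - x (m + 4) * hd
      · by_cases hl2 : (i : ℕ) = m + 2
        · rw [hl2]
          rw [if_pos (by omega), if_neg (by omega), if_pos (by omega), if_pos (by omega)]
          try rw [show m + 2 - 1 = m + 1 from by omega]
          try rw [show m + 2 + 1 = m + 3 from by omega]
          try rw [show m + 2 + 2 = m + 4 from by omega]
          have hne := hμne (m + 3) (by omega) (by omega)
          have hc := hγ (m + 3) (by omega) (by omega)
          have hd := hμr (m + 3) (by omega) (by omega)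
          have ha := hαr (m + 3) (by omega) (by omega)
          have hz := hzr (m + 3) (by omega) (by omega)
          try rw [show m + 3 - 2 = m + 1 from by omega] at hc
          try rw [show m + 3 - 2 = m + 1 from by omega] at hd
          try rw [show m + 3 - 2 = m + 1 from by omega] at hz
          try rw [show m + 3 - 1 = m + 2 from by omega] at hd
          try rw [show m + 3 - 1 = m + 2 from by omega] at ha
          try rw [show m + 3 - 1 = m + 2 from by omega] at hz
          rw [eq_div_iff hne] at ha hz
          have hx1 := hxr (m + 1) (by omega) (by omega)
          have hx2 := hxr (m + 2) (by omega) (by omega)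
          linear_combination e (m + 3) * hx1 + γ (m + 3) * hx2 + μ (m + 3) * hxn1 + hz
            - x (m + 4) * ha - x (m + 2) * hc - x (m + 3) * hd
        · obtain ⟨p, hp, hple⟩ : ∃ p, (i : ℕ) = p + 2 ∧ p + 2 ≤ m + 1 :=
            ⟨(i : ℕ) - 2, by omega, by omega⟩
          rw [hp]
          rw [if_pos (by omega), if_pos (by omega), if_pos (by omega), if_pos (by omega)]
          try rw [show p + 2 - 1 = p + 1 from by omega]
          try rw [show p + 2 + 1 = p + 3 from by omega]
          try rw [show p + 2 + 2 = p + 4 from by omega]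
          try rw [show p + 2 + 3 = p + 5 from by omega]
          have hne := hμne (p + 3) (by omega) (by omega)
          have hc := hγ (p + 3) (by omega) (by omega)
          have hd := hμr (p + 3) (by omega) (by omega)
          have ha := hαr (p + 3) (by omega) (by omega)
          have hb := hβr (p + 3) (by omega) (by omega)
          have hz := hzr (p + 3) (by omega) (by omega)
          try rw [show p + 3 - 2 = p + 1 from by omega] at hc
          try rw [show p + 3 - 2 = p + 1 from by omega] at hd
          try rw [show p + 3 - 2 = p + 1 from by omega] at hz
          try rw [show p + 3 - 1 = p + 2 from by omega] at hd
          try rw [show p + 3 - 1 = p + 2 from by omega] at ha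
          try rw [show p + 3 - 1 = p + 2 from by omega] at hz
          rw [eq_div_iff hne] at ha hb hz
          have hx1 := hxr (p + 1) (by omega) (by omega)
          have hx2 := hxr (p + 2) (by omega) (by omega)
          have hx3 := hxr (p + 3) (by omega) (by omega)
          linear_combination e (p + 3) * hx1 + γ (p + 3) * hx2 + μ (p + 3) * hx3 + hz
            - x (p + 4) * ha - x (p + 5) * hb - x (p + 2) * hc - x (p + 3) * hd
end

section
/- Let n ≥ 4 and let P be the n×n pentadiagonal matrix over a field F with diagonal entries d₁,…,dₙ, first superdiagonal a₁,…,aₙ₋₁, second superdiagonal b₁,…,bₙ₋₂, first subdiagonal c₂,…,cₙ, second subdiagonal e₃,…,eₙ, and all other entries zero. Define ψ, σ, φ, ρ by the PTRANS-II recurrences ψₙ = dₙ, σₙ = cₙ/ψₙ, φₙ = eₙ/ψₙ, ρₙ₋₁ = aₙ₋₁, ψₙ₋₁ = dₙ₋₁ − σₙρₙ₋₁, σₙ₋₁ = (cₙ₋₁ − φₙρₙ₋₁)/ψₙ₋₁, φₙ₋₁ = eₙ₋₁/ψₙ₋₁, and for i = n−2 down to 1: ρᵢ = aᵢ − σᵢ₊₂bᵢ,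 ψᵢ = dᵢ − φᵢ₊₂bᵢ − σᵢ₊₁ρᵢ, and (for i ≥ 2) σᵢ = (cᵢ − φᵢ₊₁ρᵢ)/ψᵢ, (for i ≥ 3) φᵢ = eᵢ/ψᵢ. If ψᵢ ≠ 0 for all i = 1,…,n, then P = U·L, where U is the upper triangular banded matrix with diagonal entries ψ₁,…,ψₙ, first superdiagonal entries ρ₁,…,ρₙ₋₁, second superdiagonal entries b₁,…,bₙ₋₂, and zeros elsewhere, and L is the unit lower triangular banded matrix with ones on the diagonal, first subdiagonal entries σ₂,…,σₙ, second subdiagonal entries φ₃,…,φₙ, and zeros elsewhere. -/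
open Matrix

lemma sum_fin_ite {F : Type*} [AddCommMonoid F] (n m : ℕ) (g : F) :
    (∑ k : Fin n, if (k : ℕ) = m then g else 0) = if m < n then g else 0 := by
  split_ifs with h
  · rw [Finset.sum_eq_single (⟨m, h⟩ : Fin n)]
    · simp
    · intro k _ hk
      exact if_neg (fun hkm => hk (Fin.ext hkm))
    · simp
  · apply Finset.sum_eq_zero
    intro k _
    have := k.isLt
    exact if_neg (by omega)

theorem stmt_3 {F : Type*} [Field F] (n : ℕ) (hn : 4 ≤ n)
    (d a b c e : ℕ → F)
    (P : Matrix (Fin n) (Fin n) F)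
    (hP : ∀ i j : Fin n,
      P i j =
        if (j : ℕ) = (i : ℕ) + 1 then a ((i : ℕ) + 1)
        else if (j : ℕ) = (i : ℕ) + 2 then b ((i : ℕ) + 1)
        else if (i : ℕ) = (j : ℕ) + 1 then c ((i : ℕ) + 1)
        else if (i : ℕ) = (j : ℕ) + 2 then e ((i : ℕ) + 1)
        else if (i : ℕ) = (j : ℕ) then d ((i : ℕ) + 1)
        else 0)
    (ψ σ φ ρ : ℕ → F)
    (hψn : ψ n = d n) (hσn : σ n = c n / ψ n) (hφn : φ n = e n / ψ n)
    (hρn1 : ρ (n - 1) = a (n - 1))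
    (hψn1 : ψ (n - 1) = d (n - 1) - σ n * ρ (n - 1))
    (hσn1 : σ (n - 1) = (c (n - 1) - φ n * ρ (n - 1)) / ψ (n - 1))
    (hφn1 : φ (n - 1) = e (n - 1) / ψ (n - 1))
    (hρr : ∀ i, 1 ≤ i → i ≤ n - 2 → ρ i = a i - σ (i + 2) * b i)
    (hψr : ∀ i, 1 ≤ i → i ≤ n - 2 → ψ i = d i - φ (i + 2) * b i - σ (i + 1) * ρ i)
    (hσr : ∀ i, 2 ≤ i → i ≤ n - 2 → σ i = (c i - φ (i + 1) * ρ i) / ψ i)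
    (hφr : ∀ i, 3 ≤ i → i ≤ n - 2 → φ i = e i / ψ i)
    (hψne : ∀ i, 1 ≤ i → i ≤ n → ψ i ≠ 0)
    (U L : Matrix (Fin n) (Fin n) F)
    (hU : ∀ i j : Fin n,
      U i j =
        if (i : ℕ) = (j : ℕ) then ψ ((i : ℕ) + 1)
        else if (j : ℕ) = (i : ℕ) + 1 then ρ ((i : ℕ) + 1)
        else if (j : ℕ) = (i : ℕ) + 2 then b ((i : ℕ) + 1)
        else 0)
    (hL : ∀ i j : Fin n,
      L i j =
        if (i : ℕ) = (j : ℕ) then 1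
        else if (i : ℕ) = (j : ℕ) + 1 then σ ((i : ℕ) + 1)
        else if (i : ℕ) = (j : ℕ) + 2 then φ ((i : ℕ) + 1)
        else 0)
    : P = U * L := by
  apply Matrix.ext
  intro i j
  rw [mul_apply, hP]
  have hI : (i : ℕ) < n := i.isLt
  have hJ : (j : ℕ) < n := j.isLt
  have key : ∀ k : Fin n, U i k * L k j =
      (if (k : ℕ) = (j : ℕ) then
        (if (i:ℕ) = (j:ℕ) then ψ ((i:ℕ)+1) else if (j:ℕ) = (i:ℕ)+1 then ρ ((i:ℕ)+1)
         else if (j:ℕ) = (i:ℕ)+2 then b ((i:ℕ)+1) else 0)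
       else 0)
      + (if (k : ℕ) = (j : ℕ) + 1 then
        (if (i:ℕ) = (j:ℕ)+1 then ψ ((i:ℕ)+1) else if (j:ℕ)+1 = (i:ℕ)+1 then ρ ((i:ℕ)+1)
         else if (j:ℕ)+1 = (i:ℕ)+2 then b ((i:ℕ)+1) else 0) * σ ((j:ℕ)+2)
       else 0)
      + (if (k : ℕ) = (j : ℕ) + 2 then
        (if (i:ℕ) = (j:ℕ)+2 then ψ ((i:ℕ)+1) else if (j:ℕ)+2 = (i:ℕ)+1 then ρ ((i:ℕ)+1)
         else if (j:ℕ)+2 = (i:ℕ)+2 then b ((i:ℕ)+1) else 0) * φ ((j:ℕ)+3)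
       else 0) := by
    intro k
    rw [hU i k, hL k j]
    obtain ⟨K, hK⟩ := k
    simp only [Fin.val_mk]
    rcases (by omega : K = (j:ℕ) ∨ K = (j:ℕ) + 1 ∨ K = (j:ℕ) + 2 ∨
        (K ≠ (j:ℕ) ∧ K ≠ (j:ℕ) + 1 ∧ K ≠ (j:ℕ) + 2)) with h | h | h | ⟨h1, h2, h3⟩
    · subst h
      have A : ¬((j:ℕ) = (j:ℕ) + 1) := by omega
      have B : ¬((j:ℕ) = (j:ℕ) + 2) := by omega
      simp [A, B]
    · subst h
      have A : ¬((j:ℕ) + 1 = (j:ℕ)) := by omega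
      have B : ¬((j:ℕ) + 1 = (j:ℕ) + 2) := by omega
      have C : (j:ℕ) + 1 + 1 = (j:ℕ) + 2 := rfl
      simp [A, B, C]
    · subst h
      have A : ¬((j:ℕ) + 2 = (j:ℕ)) := by omega
      have B : ¬((j:ℕ) + 2 = (j:ℕ) + 1) := by omega
      have C : (j:ℕ) + 2 + 1 = (j:ℕ) + 3 := rfl
      simp [A, B, C]
    · simp [h1, h2, h3]
  rw [Finset.sum_congr rfl (fun k _ => key k), Finset.sum_add_distrib,
    Finset.sum_add_distrib, sum_fin_ite, sum_fin_ite, sum_fin_ite, if_pos hJ]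
  clear key hP hU hL
  obtain ⟨I, hI'⟩ := i
  obtain ⟨J, hJ'⟩ := j
  simp only [Fin.val_mk] at *
  rcases (by omega : I = J ∨ J = I + 1 ∨ J = I + 2 ∨ I = J + 1 ∨ I = J + 2 ∨
      I + 2 < J ∨ J + 2 < I) with h | h | h | h | h | h | h
  · -- diagonal d
    subst h
    have A : ¬(I = I + 1) := by omega
    have B : ¬(I = I + 2) := by omega
    have C : ¬(I + 2 = I + 1) := by omega
    simp only [A, B, C, eq_self_iff_true, if_true, if_false]
    by_cases h2 : I + 2 < n
    · rw [if_pos h2, if_pos (show I + 1 < n by omega), hψr (I + 1) (by omega) (by omega)]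
      ring
    · by_cases h1 : I + 1 < n
      · rw [if_pos h1, if_neg h2]
        have e1 : I + 1 = n - 1 := by omega
        have e2 : I + 2 = n := by omega
        rw [e1, e2, hψn1]
        ring
      · rw [if_neg h1, if_neg h2]
        have e1 : I + 1 = n := by omega
        rw [e1, hψn]
        ring
  · -- superdiag a
    subst h
    have n1 : I + 1 + 1 = I + 2 := rfl
    have n2 : I + 1 + 2 = I + 3 := rfl
    have A : ¬(I + 1 = I + 2) := by omega
    have B : ¬(I = I + 2) := by omega
    have C : ¬(I = I + 3) := by omega
    have D : ¬(I = I + 1) := by omega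
    have E : ¬(I + 2 = I + 1) := by omega
    have G : ¬(I + 3 = I + 1) := by omega
    have H : ¬(I + 3 = I + 2) := by omega
    simp only [n1, n2, A, B, C, D, E, G, H, eq_self_iff_true, if_true, if_false]
    by_cases h2 : I + 2 < n
    · rw [if_pos h2, hρr (I + 1) (by omega) (by omega)]
      by_cases h3 : I + 3 < n <;> [rw [if_pos h3]; rw [if_neg h3]] <;>
        · rw [show I + 1 + 2 = I + 3 from rfl]
          ring
    · rw [if_neg h2, if_neg (show ¬ I + 3 < n by omega)]
      have e1 : I + 1 = n - 1 := by omega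
      rw [e1, hρn1]
      ring
  · -- superdiag b
    subst h
    have n1 : I + 2 + 1 = I + 3 := rfl
    have n2 : I + 2 + 2 = I + 4 := rfl
    have A : ¬(I + 2 = I + 1) := by omega
    have B : ¬(I = I + 3) := by omega
    have C : ¬(I = I + 4) := by omega
    have D : ¬(I = I + 2) := by omega
    have E : ¬(I + 3 = I + 1) := by omega
    have G : ¬(I + 3 = I + 2) := by omega
    have H : ¬(I + 4 = I + 1) := by omega
    have K2 : ¬(I + 4 = I + 2) := by omega
    have D2 : ¬(I = I + 1) := by omega
    simp only [n1, n2, A, B, C, D, E, G, H, K2, D2, eq_self_iff_true, if_true, if_false]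
    split_ifs <;> ring
  · -- subdiag c
    subst h
    have n1 : J + 1 + 1 = J + 2 := rfl
    have n2 : J + 1 + 2 = J + 3 := rfl
    have A : ¬(J = J + 2) := by omega
    have B : ¬(J = J + 3) := by omega
    have C : ¬(J + 1 = J) := by omega
    have D : ¬(J + 1 = J + 2) := by omega
    have H : ¬(J = J + 1) := by omega
    have g1 : J + 1 < n := hI'
    simp only [n1, n2, A, B, C, D, H, g1, eq_self_iff_true, if_true, if_false,
      zero_add, add_zero]
    have hne : ψ (J + 2) ≠ 0 := hψne _ (by omega) (by omega)
    by_cases h2 : J + 2 < n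
    · rw [if_pos h2]
      by_cases h3 : J + 2 ≤ n - 2
      · rw [hσr (J + 2) (by omega) h3, show J + 2 + 1 = J + 3 from rfl]
        field_simp
        ring
      · have e1 : J + 2 = n - 1 := by omega
        have e2 : J + 3 = n := by omega
        rw [e1, e2, hσn1]
        have hne' : ψ (n - 1) ≠ 0 := by rw [← e1]; exact hne
        field_simp
        ring
    · rw [if_neg h2]
      have e1 : J + 2 = n := by omega
      rw [e1, hσn]
      have hne' : ψ n ≠ 0 := hψne n (by omega) le_rfl
      field_simp
      ring
  · -- subdiag e
    subst h
    have n1 : J + 2 + 1 = J + 3 := rfl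
    have n2 : J + 2 + 2 = J + 4 := rfl
    have A : ¬(J = J + 3) := by omega
    have B : ¬(J = J + 4) := by omega
    have C : ¬(J + 2 = J + 1) := by omega
    have D : ¬(J + 2 = J) := by omega
    have E : ¬(J + 1 = J + 3) := by omega
    have G : ¬(J + 1 = J + 4) := by omega
    have g1 : J + 1 < n := by omega
    have g2 : J + 2 < n := hI'
    simp only [n1, n2, A, B, C, D, E, G, g1, g2, eq_self_iff_true, if_true, if_false,
      zero_add, add_zero, zero_mul]
    have hne : ψ (J + 3) ≠ 0 := hψne _ (by omega) (by omega)
    by_cases h3 : J + 3 ≤ n - 2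
    · rw [hφr (J + 3) (by omega) h3]
      field_simp
    · by_cases h4 : J + 3 = n - 1
      · rw [h4, hφn1]
        have hne' : ψ (n - 1) ≠ 0 := by rw [← h4]; exact hne
        field_simp
      · have e1 : J + 3 = n := by omega
        rw [e1, hφn]
        have hne' : ψ n ≠ 0 := hψne n (by omega) le_rfl
        field_simp
  · -- far upper
    have A : ¬(J = I + 1) := by omega
    have B : ¬(J = I + 2) := by omega
    have C : ¬(I = J + 1) := by omega
    have D : ¬(I = J + 2) := by omega
    have E : ¬(I = J) := by omega
    have G : ¬(J + 1 = I + 1) := by omega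
    have H : ¬(J + 1 = I + 2) := by omega
    have K2 : ¬(J + 2 = I + 1) := by omega
    have K3 : ¬(J + 2 = I + 2) := by omega
    simp only [A, B, C, D, E, G, H, K2, K3, if_false]
    split_ifs <;> ring
  · -- far lower
    have A : ¬(J = I + 1) := by omega
    have B : ¬(J = I + 2) := by omega
    have C : ¬(I = J + 1) := by omega
    have D : ¬(I = J + 2) := by omega
    have E : ¬(I = J) := by omega
    have G : ¬(J + 1 = I + 1) := by omega
    have H : ¬(J + 1 = I + 2) := by omega
    have K2 : ¬(J + 2 = I + 1) := by omega
    have K3 : ¬(J + 2 = I + 2) := by omega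
    simp only [A, B, C, D, E, G, H, K2, K3, if_false]
    split_ifs <;> ring
end

section
/- Let n ≥ 4 and let P be the n×n pentadiagonal matrix over a field F with diagonal entries d₁,…,dₙ, first superdiagonal a₁,…,aₙ₋₁, second superdiagonal b₁,…,bₙ₋₂, first subdiagonal c₂,…,cₙ, second subdiagonal e₃,…,eₙ, and all other entries zero. Define ψ, σ, φ, ρ by the PTRANS-II recurrences (ψₙ = dₙ, σₙ = cₙ/ψₙ, φₙ = eₙ/ψₙ, ρₙ₋₁ = aₙ₋₁, ψₙ₋₁ = dₙ₋₁ − σₙρₙ₋₁, σₙ₋₁ = (cₙ₋₁ − φₙρₙ₋₁)/ψₙ₋₁, φₙ₋₁ = eₙ₋₁/ψₙ₋₁; for i = n−2,…,1: ρᵢ = aᵢ − σᵢ₊₂bᵢ, ψᵢ = dᵢ − φᵢ₊₂bᵢ − σᵢ₊₁ρᵢ, σᵢ = (cᵢ − φᵢ₊₁ρᵢ)/ψᵢ for i ≥ 2, φᵢ = eᵢ/ψᵢ for i ≥ 3). Given a right-hand side vector y = (y₁,…,yₙ), define wₙ = yₙ/ψₙ, wₙ₋₁ = (yₙ₋₁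 − wₙρₙ₋₁)/ψₙ₋₁, and wᵢ = (yᵢ − wᵢ₊₂bᵢ − wᵢ₊₁ρᵢ)/ψᵢ for i = n−2,…,1. If ψᵢ ≠ 0 for all i, then a vector x = (x₁,…,xₙ) satisfies P·x = y if and only if it satisfies the transformed unit lower triangular system x₁ = w₁, σ₂x₁ + x₂ = w₂, and φᵢxᵢ₋₂ + σᵢxᵢ₋₁ + xᵢ = wᵢ for i = 3,…,n. -/
open Matrix

set_option maxHeartbeats 1000000

private lemma sumInd {F : Type*} [Field F] (n t : ℕ) (p : Prop) [Decidable p] (v : F) :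
    ∑ j : Fin n, (if p ∧ (j : ℕ) = t then v else 0) = if p ∧ t < n then v else 0 := by
  rw [Fin.sum_univ_eq_sum_range (fun m => if p ∧ m = t then v else 0)]
  by_cases hp : p
  · simp only [hp, true_and]
    rw [Finset.sum_ite_eq' (Finset.range n) t (fun _ => v)]
    simp
  · simp [hp]

private lemma rowLem {F : Type*} [Field F] (n : ℕ)
    (d a b c e : ℕ → F)
    (P : Matrix (Fin n) (Fin n) F)
    (hP : ∀ i j : Fin n,
      P i j =
        if (j : ℕ) = (i : ℕ) + 1 then a ((i : ℕ) + 1)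
        else if (j : ℕ) = (i : ℕ) + 2 then b ((i : ℕ) + 1)
        else if (i : ℕ) = (j : ℕ) + 1 then c ((i : ℕ) + 1)
        else if (i : ℕ) = (j : ℕ) + 2 then e ((i : ℕ) + 1)
        else if (i : ℕ) = (j : ℕ) then d ((i : ℕ) + 1)
        else 0)
    (x : ℕ → F) (i : Fin n) :
    P.mulVec (fun j : Fin n => x ((j : ℕ) + 1)) i =
      (if 3 ≤ (i : ℕ) + 1 then e ((i : ℕ) + 1) * x ((i : ℕ) + 1 - 2) else 0)
      + (if 2 ≤ (i : ℕ) + 1 then c ((i : ℕ) + 1) * x ((i : ℕ) + 1 - 1) else 0)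
      + d ((i : ℕ) + 1) * x ((i : ℕ) + 1)
      + (if (i : ℕ) + 1 + 1 ≤ n then a ((i : ℕ) + 1) * x ((i : ℕ) + 1 + 1) else 0)
      + (if (i : ℕ) + 1 + 2 ≤ n then b ((i : ℕ) + 1) * x ((i : ℕ) + 1 + 2) else 0) := by
  have hterm : ∀ j : Fin n, P i j * x ((j : ℕ) + 1) =
      (if 3 ≤ (i : ℕ) + 1 ∧ (j : ℕ) = (i : ℕ) - 2 then e ((i : ℕ) + 1) * x ((i : ℕ) + 1 - 2) else 0)
      + (if 2 ≤ (i : ℕ) + 1 ∧ (j : ℕ) = (i : ℕ) - 1 then c ((i : ℕ) + 1) * x ((i : ℕ) + 1 - 1) else 0)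
      + (if 1 ≤ (i : ℕ) + 1 ∧ (j : ℕ) = (i : ℕ) then d ((i : ℕ) + 1) * x ((i : ℕ) + 1) else 0)
      + (if 1 ≤ (i : ℕ) + 1 ∧ (j : ℕ) = (i : ℕ) + 1 then a ((i : ℕ) + 1) * x ((i : ℕ) + 2) else 0)
      + (if 1 ≤ (i : ℕ) + 1 ∧ (j : ℕ) = (i : ℕ) + 2 then b ((i : ℕ) + 1) * x ((i : ℕ) + 3) else 0) := by
    intro j
    rw [hP]
    split_ifs <;> try (exfalso; omega)
    all_goals (first
      | (rw [show (j : ℕ) + 1 = (i : ℕ) + 1 - 2 from by omega]; ring)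
      | (rw [show (j : ℕ) + 1 = (i : ℕ) + 1 - 1 from by omega]; ring)
      | (rw [show (j : ℕ) + 1 = (i : ℕ) + 1 from by omega]; ring)
      | (rw [show (j : ℕ) + 1 = (i : ℕ) + 2 from by omega]; ring)
      | (rw [show (j : ℕ) + 1 = (i : ℕ) + 3 from by omega]; ring)
      | ring)
  rw [mulVec, dotProduct]
  rw [Finset.sum_congr rfl (fun j _ => hterm j)]
  rw [Finset.sum_add_distrib, Finset.sum_add_distrib, Finset.sum_add_distrib,
    Finset.sum_add_distrib]
  rw [sumInd, sumInd, sumInd, sumInd, sumInd]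
  have hi := i.isLt
  congr 1
  congr 1
  congr 1
  congr 1
  · exact if_congr (by omega) rfl rfl
  · exact if_congr (by omega) rfl rfl
  · rw [if_pos (⟨by omega, hi⟩ : 1 ≤ (i : ℕ) + 1 ∧ (i : ℕ) < n)]
  · exact if_congr (by omega) rfl rfl
  · exact if_congr (by omega) rfl rfl

private def gA {F : Type*} [Field F] (φ σ x w : ℕ → F) (k : ℕ) : F :=
  (if 3 ≤ k then φ k * x (k - 2) else 0) + (if 2 ≤ k then σ k * x (k - 1) else 0) + x k - w k

private lemma keyLem {F : Type*} [Field F] (n : ℕ) (hn : 4 ≤ n)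
    (d a b c e : ℕ → F)
    (ψ σ φ ρ : ℕ → F)
    (hψn : ψ n = d n) (hσn : σ n = c n / ψ n) (hφn : φ n = e n / ψ n)
    (hρn1 : ρ (n - 1) = a (n - 1))
    (hψn1 : ψ (n - 1) = d (n - 1) - σ n * ρ (n - 1))
    (hσn1 : σ (n - 1) = (c (n - 1) - φ n * ρ (n - 1)) / ψ (n - 1))
    (hφn1 : φ (n - 1) = e (n - 1) / ψ (n - 1))
    (hρr : ∀ i, 1 ≤ i → i ≤ n - 2 → ρ i = a i - σ (i + 2) * b i)
    (hψr : ∀ i, 1 ≤ i → i ≤ n - 2 → ψ i = d i - φ (i + 2) * b i - σ (i + 1) * ρ i)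
    (hσr : ∀ i, 2 ≤ i → i ≤ n - 2 → σ i = (c i - φ (i + 1) * ρ i) / ψ i)
    (hφr : ∀ i, 3 ≤ i → i ≤ n - 2 → φ i = e i / ψ i)
    (y w : ℕ → F)
    (hwn : w n = y n / ψ n)
    (hwn1 : w (n - 1) = (y (n - 1) - w n * ρ (n - 1)) / ψ (n - 1))
    (hwr : ∀ i, 1 ≤ i → i ≤ n - 2 → w i = (y i - w (i + 2) * b i - w (i + 1) * ρ i) / ψ i)
    (hψne : ∀ i, 1 ≤ i → i ≤ n → ψ i ≠ 0)
    (x : ℕ → F) :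
    ∀ k, 1 ≤ k → k ≤ n →
      (if 3 ≤ k then e k * x (k - 2) else 0) + (if 2 ≤ k then c k * x (k - 1) else 0)
        + d k * x k + (if k + 1 ≤ n then a k * x (k + 1) else 0)
        + (if k + 2 ≤ n then b k * x (k + 2) else 0) - y k
      = ψ k * gA φ σ x w k + (if k + 1 ≤ n then ρ k * gA φ σ x w (k + 1) else 0)
        + (if k + 2 ≤ n then b k * gA φ σ x w (k + 2) else 0) := by
  obtain ⟨m, rfl⟩ : ∃ m, n = m + 4 := ⟨n - 4, by omega⟩
  simp only [show m + 4 - 1 = m + 3 by omega] at hρn1 hψn1 hσn1 hφn1 hwn1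
  intro k h1 h2
  rcases (by omega : k = 1 ∨ k = 2 ∨ (3 ≤ k ∧ k ≤ m + 2) ∨ k = m + 3 ∨ k = m + 4)
    with rfl | rfl | ⟨h3, h4⟩ | rfl | rfl
  · have hne := hψne 1 (by omega) (by omega)
    have Hd : d 1 = ψ 1 + φ 3 * b 1 + σ 2 * ρ 1 := by
      have h := hψr 1 (by omega) (by omega); norm_num at h; linear_combination -h
    have Ha : a 1 = ρ 1 + σ 3 * b 1 := by
      have h := hρr 1 (by omega) (by omega); norm_num at h; linear_combination -h
    have Hy : y 1 = ψ 1 * w 1 + w 3 * b 1 + w 2 * ρ 1 := by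
      have h := hwr 1 (by omega) (by omega); norm_num at h
      field_simp at h; linear_combination -h
    unfold gA
    norm_num
    try (split_ifs <;> try (exfalso; omega))
    linear_combination x 1 * Hd + x 2 * Ha - Hy
  · have hne := hψne 2 (by omega) (by omega)
    have Hc : c 2 = ψ 2 * σ 2 + φ 3 * ρ 2 := by
      have h := hσr 2 (by omega) (by omega); norm_num at h; field_simp at h
      linear_combination -h
    have Hd : d 2 = ψ 2 + φ 4 * b 2 + σ 3 * ρ 2 := by
      have h := hψr 2 (by omega) (by omega); norm_num at h; linear_combination -h
    have Ha : a 2 = ρ 2 + σ 4 * b 2 := by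
      have h := hρr 2 (by omega) (by omega); norm_num at h; linear_combination -h
    have Hy : y 2 = ψ 2 * w 2 + w 4 * b 2 + w 3 * ρ 2 := by
      have h := hwr 2 (by omega) (by omega); norm_num at h; field_simp at h
      linear_combination -h
    unfold gA
    norm_num
    try (split_ifs <;> try (exfalso; omega))
    linear_combination x 1 * Hc + x 2 * Hd + x 3 * Ha - Hy
  · obtain ⟨p, rfl⟩ : ∃ p, k = p + 3 := ⟨k - 3, by omega⟩
    have hne := hψne (p + 3) (by omega) (by omega)
    have He : e (p + 3) = ψ (p + 3) * φ (p + 3) := by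
      have h := hφr (p + 3) (by omega) (by omega); field_simp at h; linear_combination -h
    have Hc : c (p + 3) = ψ (p + 3) * σ (p + 3) + φ (p + 4) * ρ (p + 3) := by
      have h := hσr (p + 3) (by omega) (by omega)
      simp only [show p + 3 + 1 = p + 4 by omega] at h
      field_simp at h; linear_combination -h
    have Hd : d (p + 3) = ψ (p + 3) + φ (p + 5) * b (p + 3) + σ (p + 4) * ρ (p + 3) := by
      have h := hψr (p + 3) (by omega) (by omega)
      simp only [show p + 3 + 1 = p + 4 by omega, show p + 3 + 2 = p + 5 by omega] at h
      linear_combination -h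
    have Ha : a (p + 3) = ρ (p + 3) + σ (p + 5) * b (p + 3) := by
      have h := hρr (p + 3) (by omega) (by omega)
      simp only [show p + 3 + 2 = p + 5 by omega] at h; linear_combination -h
    have Hy : y (p + 3) = ψ (p + 3) * w (p + 3) + w (p + 5) * b (p + 3) + w (p + 4) * ρ (p + 3) := by
      have h := hwr (p + 3) (by omega) (by omega)
      simp only [show p + 3 + 1 = p + 4 by omega, show p + 3 + 2 = p + 5 by omega] at h
      field_simp at h; linear_combination -h
    unfold gA
    simp only [show p + 3 + 1 = p + 4 by omega, show p + 3 + 2 = p + 5 by omega,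
      show p + 4 + 1 = p + 5 by omega, show p + 4 + 2 = p + 6 by omega,
      show p + 3 - 2 = p + 1 by omega, show p + 3 - 1 = p + 2 by omega,
      show p + 4 - 2 = p + 2 by omega, show p + 4 - 1 = p + 3 by omega,
      show p + 5 - 2 = p + 3 by omega, show p + 5 - 1 = p + 4 by omega]
    try (split_ifs <;> try (exfalso; omega))
    linear_combination x (p + 1) * He + x (p + 2) * Hc + x (p + 3) * Hd + x (p + 4) * Ha - Hy
  · have hne := hψne (m + 3) (by omega) (by omega)
    have hnen := hψne (m + 4) (by omega) (by omega)
    have He : e (m + 3) = ψ (m + 3) * φ (m + 3) := by rw [hφn1]; field_simp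
    have Hc : c (m + 3) = ψ (m + 3) * σ (m + 3) + φ (m + 4) * ρ (m + 3) := by
      rw [hσn1]; field_simp; ring
    have Hd : d (m + 3) = ψ (m + 3) + σ (m + 4) * ρ (m + 3) := by rw [hψn1]; ring
    have Ha : a (m + 3) = ρ (m + 3) := hρn1.symm
    have Hy : y (m + 3) = ψ (m + 3) * w (m + 3) + w (m + 4) * ρ (m + 3) := by
      rw [hwn1]; field_simp; ring
    unfold gA
    simp only [show m + 3 + 1 = m + 4 by omega, show m + 3 + 2 = m + 5 by omega,
      show m + 3 - 2 = m + 1 by omega, show m + 3 - 1 = m + 2 by omega,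
      show m + 4 - 2 = m + 2 by omega, show m + 4 - 1 = m + 3 by omega]
    try (split_ifs <;> try (exfalso; omega))
    linear_combination x (m + 1) * He + x (m + 2) * Hc + x (m + 3) * Hd + x (m + 4) * Ha - Hy
  · have hne := hψne (m + 4) (by omega) (by omega)
    have He : e (m + 4) = ψ (m + 4) * φ (m + 4) := by rw [hφn]; field_simp
    have Hc : c (m + 4) = ψ (m + 4) * σ (m + 4) := by rw [hσn]; field_simp
    have Hy : y (m + 4) = ψ (m + 4) * w (m + 4) := by rw [hwn]; field_simp
    unfold gA
    simp only [show m + 4 - 2 = m + 2 by omega, show m + 4 - 1 = m + 3 by omega]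
    try (split_ifs <;> try (exfalso; omega))
    linear_combination x (m + 2) * He + x (m + 3) * Hc + x (m + 4) * hψn.symm - Hy

theorem stmt_4 {F : Type*} [Field F] (n : ℕ) (hn : 4 ≤ n)
    (d a b c e : ℕ → F)
    (P : Matrix (Fin n) (Fin n) F)
    (hP : ∀ i j : Fin n,
      P i j =
        if (j : ℕ) = (i : ℕ) + 1 then a ((i : ℕ) + 1)
        else if (j : ℕ) = (i : ℕ) + 2 then b ((i : ℕ) + 1)
        else if (i : ℕ) = (j : ℕ) + 1 then c ((i : ℕ) + 1)
        else if (i : ℕ) = (j : ℕ) + 2 then e ((i : ℕ) + 1)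
        else if (i : ℕ) = (j : ℕ) then d ((i : ℕ) + 1)
        else 0)
    (ψ σ φ ρ : ℕ → F)
    (hψn : ψ n = d n) (hσn : σ n = c n / ψ n) (hφn : φ n = e n / ψ n)
    (hρn1 : ρ (n - 1) = a (n - 1))
    (hψn1 : ψ (n - 1) = d (n - 1) - σ n * ρ (n - 1))
    (hσn1 : σ (n - 1) = (c (n - 1) - φ n * ρ (n - 1)) / ψ (n - 1))
    (hφn1 : φ (n - 1) = e (n - 1) / ψ (n - 1))
    (hρr : ∀ i, 1 ≤ i → i ≤ n - 2 → ρ i = a i - σ (i + 2) * b i)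
    (hψr : ∀ i, 1 ≤ i → i ≤ n - 2 → ψ i = d i - φ (i + 2) * b i - σ (i + 1) * ρ i)
    (hσr : ∀ i, 2 ≤ i → i ≤ n - 2 → σ i = (c i - φ (i + 1) * ρ i) / ψ i)
    (hφr : ∀ i, 3 ≤ i → i ≤ n - 2 → φ i = e i / ψ i)
    (y w : ℕ → F)
    (hwn : w n = y n / ψ n)
    (hwn1 : w (n - 1) = (y (n - 1) - w n * ρ (n - 1)) / ψ (n - 1))
    (hwr : ∀ i, 1 ≤ i → i ≤ n - 2 → w i = (y i - w (i + 2) * b i - w (i + 1) * ρ i) / ψ i)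
    (hψne : ∀ i, 1 ≤ i → i ≤ n → ψ i ≠ 0)
    (x : ℕ → F) :
    (P.mulVec (fun i : Fin n => x ((i : ℕ) + 1)) = fun i : Fin n => y ((i : ℕ) + 1)) ↔
      (x 1 = w 1 ∧ σ 2 * x 1 + x 2 = w 2 ∧
       ∀ i, 3 ≤ i → i ≤ n → φ i * x (i - 2) + σ i * x (i - 1) + x i = w i) := by
  have key := keyLem n hn d a b c e ψ σ φ ρ hψn hσn hφn hρn1 hψn1 hσn1 hφn1 hρr hψr hσr hφr
    y w hwn hwn1 hwr hψne x
  have hrow := rowLem n d a b c e P hP x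
  have gA1 : gA φ σ x w 1 = x 1 - w 1 := by unfold gA; norm_num
  have gA2 : gA φ σ x w 2 = σ 2 * x 1 + x 2 - w 2 := by unfold gA; norm_num
  have gA3 : ∀ k, 3 ≤ k → gA φ σ x w k = φ k * x (k - 2) + σ k * x (k - 1) + x k - w k := by
    intro k h; unfold gA; rw [if_pos h, if_pos (by omega : 2 ≤ k)]
  rw [funext_iff]
  constructor
  · intro H
    have hzz : ∀ k, 1 ≤ k → k ≤ n →
        ψ k * gA φ σ x w k + (if k + 1 ≤ n then ρ k * gA φ σ x w (k + 1) else 0)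
          + (if k + 2 ≤ n then b k * gA φ σ x w (k + 2) else 0) = 0 := by
      intro k h1 h2
      have hi : k - 1 < n := by omega
      have hH := H ⟨k - 1, hi⟩
      rw [hrow ⟨k - 1, hi⟩] at hH
      simp only [show ((⟨k - 1, hi⟩ : Fin n) : ℕ) = k - 1 from rfl,
        show k - 1 + 1 = k by omega] at hH
      have hk := key k h1 h2
      rw [← hk, hH, sub_self]
    have gvan : ∀ q k, 1 ≤ k → k ≤ n → n ≤ k + q → gA φ σ x w k = 0 := by
      intro q
      induction q with
      | zero =>
        intro k h1 h2 h3
        have h0 := hzz k h1 h2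
        rw [if_neg (by omega), if_neg (by omega)] at h0
        have hne := hψne k h1 h2
        have hz : ψ k * gA φ σ x w k = 0 := by linear_combination h0
        exact (mul_eq_zero.mp hz).resolve_left hne
      | succ q ih =>
        intro k h1 h2 h3
        have h0 := hzz k h1 h2
        have hne := hψne k h1 h2
        have z1 : (if k + 1 ≤ n then ρ k * gA φ σ x w (k + 1) else 0) = 0 := by
          split_ifs with h
          · rw [ih (k + 1) (by omega) h (by omega), mul_zero]
          · rfl
        have z2 : (if k + 2 ≤ n then b k * gA φ σ x w (k + 2) else 0) = 0 := by
          split_ifs with h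
          · rw [ih (k + 2) (by omega) h (by omega), mul_zero]
          · rfl
        rw [z1, z2] at h0
        have hz : ψ k * gA φ σ x w k = 0 := by linear_combination h0
        exact (mul_eq_zero.mp hz).resolve_left hne
    have hgv : ∀ k, 1 ≤ k → k ≤ n → gA φ σ x w k = 0 := fun k h1 h2 =>
      gvan n k h1 h2 (by omega)
    refine ⟨?_, ?_, ?_⟩
    · have := hgv 1 (by omega) (by omega); rw [gA1] at this; linear_combination this
    · have := hgv 2 (by omega) (by omega); rw [gA2] at this; linear_combination this
    · intro i h3 hin
      have := hgv i (by omega) hin; rw [gA3 i h3] at this; linear_combination this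
  · rintro ⟨H1, H2, H3⟩ i
    have hgv : ∀ k, 1 ≤ k → k ≤ n → gA φ σ x w k = 0 := by
      intro k h1 h2
      rcases (by omega : k = 1 ∨ k = 2 ∨ 3 ≤ k) with rfl | rfl | h3
      · rw [gA1]; linear_combination H1
      · rw [gA2]; linear_combination H2
      · rw [gA3 k h3]; linear_combination H3 k h3 h2
    have hilt := i.isLt
    rw [hrow i]
    show _ = y ((i : ℕ) + 1)
    have hk := key ((i : ℕ) + 1) (by omega) (by omega)
    rw [hgv ((i : ℕ) + 1) (by omega) (by omega)] at hk
    have z1 : (if (i : ℕ) + 1 + 1 ≤ n then ρ ((i : ℕ) + 1) * gA φ σ x w ((i : ℕ) + 1 + 1) else 0) = 0 := by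
      split_ifs with h
      · rw [hgv ((i : ℕ) + 1 + 1) (by omega) h, mul_zero]
      · rfl
    have z2 : (if (i : ℕ) + 1 + 2 ≤ n then b ((i : ℕ) + 1) * gA φ σ x w ((i : ℕ) + 1 + 2) else 0) = 0 := by
      split_ifs with h
      · rw [hgv ((i : ℕ) + 1 + 2) (by omega) h, mul_zero]
      · rfl
    rw [z1, z2] at hk
    linear_combination hk
end

section
/- Let n ≥ 4 and let P be the n×n pentadiagonal matrix over a field F with diagonal entries d₁,…,dₙ, first superdiagonal a₁,…,aₙ₋₁, second superdiagonal b₁,…,bₙ₋₂, first subdiagonal c₂,…,cₙ, second subdiagonal e₃,…,eₙ, and all other entries zero. Define ψ, σ, φ, ρ, w by the PTRANS-II recurrences (ψₙ = dₙ, σₙ = cₙ/ψₙ, φₙ = eₙ/ψₙ, ρₙ₋₁ = aₙ₋₁, ψₙ₋₁ = dₙ₋₁ − σₙρₙ₋₁, σₙ₋₁ = (cₙ₋₁ − φₙρₙ₋₁)/ψₙ₋₁, φₙ₋₁ = eₙ₋₁/ψₙ₋₁; for i = n−2,…,1: ρᵢ = aᵢ − σᵢ₊₂bᵢ, ψᵢ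 = dᵢ − φᵢ₊₂bᵢ − σᵢ₊₁ρᵢ, σᵢ = (cᵢ − φᵢ₊₁ρᵢ)/ψᵢ for i ≥ 2, φᵢ = eᵢ/ψᵢ for i ≥ 3; wₙ = yₙ/ψₙ, wₙ₋₁ = (yₙ₋₁ − wₙρₙ₋₁)/ψₙ₋₁, wᵢ = (yᵢ − wᵢ₊₂bᵢ − wᵢ₊₁ρᵢ)/ψᵢ for i = n−2,…,1) and suppose ψᵢ ≠ 0 for all i. Then the vector x defined by forward substitution x₁ = w₁, x₂ = w₂ − σ₂x₁, and xᵢ = wᵢ − σᵢxᵢ₋₁ − φᵢxᵢ₋₂ for i = 3,…,n satisfies P·x = y. -/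
open Matrix

lemma band_sum {F : Type*} [Field F] {n : ℕ} (i : Fin n) (A B C E D : F) (x : ℕ → F) :
    (∑ j : Fin n,
      (if (j : ℕ) = (i : ℕ) + 1 then A
       else if (j : ℕ) = (i : ℕ) + 2 then B
       else if (i : ℕ) = (j : ℕ) + 1 then C
       else if (i : ℕ) = (j : ℕ) + 2 then E
       else if (i : ℕ) = (j : ℕ) then D
       else 0) * x ((j : ℕ) + 1)) =
      (if (i : ℕ) + 1 < n then A * x ((i : ℕ) + 2) else 0) +
      (if (i : ℕ) + 2 < n then B * x ((i : ℕ) + 3) else 0) +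
      (if 1 ≤ (i : ℕ) then C * x (i : ℕ) else 0) +
      (if 2 ≤ (i : ℕ) then E * x ((i : ℕ) - 1) else 0) +
      D * x ((i : ℕ) + 1) := by
  have hsplit : ∀ j : Fin n,
      (if (j : ℕ) = (i : ℕ) + 1 then A
       else if (j : ℕ) = (i : ℕ) + 2 then B
       else if (i : ℕ) = (j : ℕ) + 1 then C
       else if (i : ℕ) = (j : ℕ) + 2 then E
       else if (i : ℕ) = (j : ℕ) then D
       else 0) * x ((j : ℕ) + 1) =
      (if (j : ℕ) = (i : ℕ) + 1 then A * x ((j : ℕ) + 1) else 0) +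
      (if (j : ℕ) = (i : ℕ) + 2 then B * x ((j : ℕ) + 1) else 0) +
      (if (i : ℕ) = (j : ℕ) + 1 then C * x ((j : ℕ) + 1) else 0) +
      (if (i : ℕ) = (j : ℕ) + 2 then E * x ((j : ℕ) + 1) else 0) +
      (if (i : ℕ) = (j : ℕ) then D * x ((j : ℕ) + 1) else 0) := by
    intro j
    split_ifs <;> first | omega | ring
  rw [Finset.sum_congr rfl fun j _ => hsplit j]
  rw [Finset.sum_add_distrib, Finset.sum_add_distrib, Finset.sum_add_distrib,
    Finset.sum_add_distrib]
  have h1 : (∑ j : Fin n, if (j : ℕ) = (i : ℕ) + 1 then A * x ((j : ℕ) + 1) else 0) =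
      if (i : ℕ) + 1 < n then A * x ((i : ℕ) + 2) else 0 := by
    by_cases h : (i : ℕ) + 1 < n
    · rw [if_pos h, Finset.sum_eq_single (⟨(i : ℕ) + 1, h⟩ : Fin n)]
      · simp
      · intro j _ hj
        rw [if_neg (fun hc => hj (Fin.ext hc))]
      · intro hmem; exact absurd (Finset.mem_univ _) hmem
    · rw [if_neg h]
      apply Finset.sum_eq_zero
      intro j _
      rw [if_neg (by have := j.isLt; omega)]
  have h2 : (∑ j : Fin n, if (j : ℕ) = (i : ℕ) + 2 then B * x ((j : ℕ) + 1) else 0) =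
      if (i : ℕ) + 2 < n then B * x ((i : ℕ) + 3) else 0 := by
    by_cases h : (i : ℕ) + 2 < n
    · rw [if_pos h, Finset.sum_eq_single (⟨(i : ℕ) + 2, h⟩ : Fin n)]
      · simp
      · intro j _ hj
        rw [if_neg (fun hc => hj (Fin.ext hc))]
      · intro hmem; exact absurd (Finset.mem_univ _) hmem
    · rw [if_neg h]
      apply Finset.sum_eq_zero
      intro j _
      rw [if_neg (by have := j.isLt; omega)]
  have h3 : (∑ j : Fin n, if (i : ℕ) = (j : ℕ) + 1 then C * x ((j : ℕ) + 1) else 0) =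
      if 1 ≤ (i : ℕ) then C * x (i : ℕ) else 0 := by
    by_cases h : 1 ≤ (i : ℕ)
    · rw [if_pos h, Finset.sum_eq_single (⟨(i : ℕ) - 1, by omega⟩ : Fin n)]
      · have hv : ((⟨(i : ℕ) - 1, by omega⟩ : Fin n) : ℕ) = (i : ℕ) - 1 := rfl
        rw [if_pos (by rw [hv]; omega), hv, show (i : ℕ) - 1 + 1 = (i : ℕ) by omega]
      · intro j _ hj
        rw [if_neg (fun hc => hj (Fin.ext (by simp; omega)))]
      · intro hmem; exact absurd (Finset.mem_univ _) hmem
    · rw [if_neg h]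
      apply Finset.sum_eq_zero
      intro j _
      rw [if_neg (by omega)]
  have h4 : (∑ j : Fin n, if (i : ℕ) = (j : ℕ) + 2 then E * x ((j : ℕ) + 1) else 0) =
      if 2 ≤ (i : ℕ) then E * x ((i : ℕ) - 1) else 0 := by
    by_cases h : 2 ≤ (i : ℕ)
    · rw [if_pos h, Finset.sum_eq_single (⟨(i : ℕ) - 2, by omega⟩ : Fin n)]
      · have hv : ((⟨(i : ℕ) - 2, by omega⟩ : Fin n) : ℕ) = (i : ℕ) - 2 := rfl
        rw [if_pos (by rw [hv]; omega), hv, show (i : ℕ) - 2 + 1 = (i : ℕ) - 1 by omega]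
      · intro j _ hj
        rw [if_neg (fun hc => hj (Fin.ext (by simp; omega)))]
      · intro hmem; exact absurd (Finset.mem_univ _) hmem
    · rw [if_neg h]
      apply Finset.sum_eq_zero
      intro j _
      rw [if_neg (by omega)]
  have h5 : (∑ j : Fin n, if (i : ℕ) = (j : ℕ) then D * x ((j : ℕ) + 1) else 0) =
      D * x ((i : ℕ) + 1) := by
    rw [Finset.sum_eq_single i]
    · rw [if_pos rfl]
    · intro j _ hj
      rw [if_neg (fun hc => hj (Fin.ext hc.symm))]
    · intro hmem; exact absurd (Finset.mem_univ _) hmem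
  rw [h1, h2, h3, h4, h5]
open Matrix Finset


theorem stmt_5 {F : Type*} [Field F] (n : ℕ) (hn : 4 ≤ n)
    (d a b c e : ℕ → F)
    (P : Matrix (Fin n) (Fin n) F)
    (hP : ∀ i j : Fin n,
      P i j =
        if (j : ℕ) = (i : ℕ) + 1 then a ((i : ℕ) + 1)
        else if (j : ℕ) = (i : ℕ) + 2 then b ((i : ℕ) + 1)
        else if (i : ℕ) = (j : ℕ) + 1 then c ((i : ℕ) + 1)
        else if (i : ℕ) = (j : ℕ) + 2 then e ((i : ℕ) + 1)
        else if (i : ℕ) = (j : ℕ) then d ((i : ℕ) + 1)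
        else 0)
    (ψ σ φ ρ : ℕ → F)
    (hψn : ψ n = d n) (hσn : σ n = c n / ψ n) (hφn : φ n = e n / ψ n)
    (hρn1 : ρ (n - 1) = a (n - 1))
    (hψn1 : ψ (n - 1) = d (n - 1) - σ n * ρ (n - 1))
    (hσn1 : σ (n - 1) = (c (n - 1) - φ n * ρ (n - 1)) / ψ (n - 1))
    (hφn1 : φ (n - 1) = e (n - 1) / ψ (n - 1))
    (hρr : ∀ i, 1 ≤ i → i ≤ n - 2 → ρ i = a i - σ (i + 2) * b i)
    (hψr : ∀ i, 1 ≤ i → i ≤ n - 2 → ψ i = d i - φ (i + 2) * b i - σ (i + 1) * ρ i)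
    (hσr : ∀ i, 2 ≤ i → i ≤ n - 2 → σ i = (c i - φ (i + 1) * ρ i) / ψ i)
    (hφr : ∀ i, 3 ≤ i → i ≤ n - 2 → φ i = e i / ψ i)
    (y w : ℕ → F)
    (hwn : w n = y n / ψ n)
    (hwn1 : w (n - 1) = (y (n - 1) - w n * ρ (n - 1)) / ψ (n - 1))
    (hwr : ∀ i, 1 ≤ i → i ≤ n - 2 → w i = (y i - w (i + 2) * b i - w (i + 1) * ρ i) / ψ i)
    (hψne : ∀ i, 1 ≤ i → i ≤ n → ψ i ≠ 0)
    (x : ℕ → F)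
    (hx1 : x 1 = w 1) (hx2 : x 2 = w 2 - σ 2 * x 1)
    (hxr : ∀ i, 3 ≤ i → i ≤ n → x i = w i - σ i * x (i - 1) - φ i * x (i - 2)) :
    P.mulVec (fun i : Fin n => x ((i : ℕ) + 1)) = fun i : Fin n => y ((i : ℕ) + 1) := by
  obtain ⟨k, rfl⟩ : ∃ k, n = k + 4 := ⟨n - 4, by omega⟩
  simp only [show k + 4 - 1 = k + 3 by omega, show k + 4 - 2 = k + 2 by omega] at hρn1 hψn1 hσn1 hφn1 hρr hψr hσr hφr hwn1 hwr
  -- derived equations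
  have hw' : ∀ m, 3 ≤ m → m ≤ k + 4 → w m = x m + σ m * x (m - 1) + φ m * x (m - 2) := by
    intro m h1 h2; rw [hxr m h1 h2]; ring
  have hw1 : w 1 = x 1 := hx1.symm
  have hw2 : w 2 = x 2 + σ 2 * x 1 := by rw [hx2]; ring
  have hy : ∀ m, 1 ≤ m → m ≤ k + 2 →
      y m = w m * ψ m + w (m + 2) * b m + w (m + 1) * ρ m := by
    intro m h1 h2
    have h := hwr m h1 h2
    rw [eq_div_iff (hψne m h1 (by omega))] at h
    linear_combination -h
  have hyn : y (k + 4) = w (k + 4) * ψ (k + 4) := by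
    have h := hwn
    rw [eq_div_iff (hψne (k + 4) (by omega) le_rfl)] at h
    linear_combination -h
  have hyn1 : y (k + 3) = w (k + 3) * ψ (k + 3) + w (k + 4) * ρ (k + 3) := by
    have h := hwn1
    rw [eq_div_iff (hψne (k + 3) (by omega) (by omega))] at h
    linear_combination -h
  have ha : ∀ m, 1 ≤ m → m ≤ k + 2 → a m = ρ m + σ (m + 2) * b m := by
    intro m h1 h2; have := hρr m h1 h2; linear_combination -this
  have hd : ∀ m, 1 ≤ m → m ≤ k + 2 → d m = ψ m + φ (m + 2) * b m + σ (m + 1) * ρ m := by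
    intro m h1 h2; have := hψr m h1 h2; linear_combination -this
  have hc : ∀ m, 2 ≤ m → m ≤ k + 2 → c m = σ m * ψ m + φ (m + 1) * ρ m := by
    intro m h1 h2
    have h := hσr m h1 h2
    rw [eq_div_iff (hψne m (by omega) (by omega))] at h
    linear_combination -h
  have he : ∀ m, 3 ≤ m → m ≤ k + 2 → e m = φ m * ψ m := by
    intro m h1 h2
    have h := hφr m h1 h2
    rw [eq_div_iff (hψne m (by omega) (by omega))] at h
    linear_combination -h
  have hcn : c (k + 4) = σ (k + 4) * ψ (k + 4) := by
    have h := hσn; rw [eq_div_iff (hψne (k + 4) (by omega) le_rfl)] at h; linear_combination -h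
  have hen : e (k + 4) = φ (k + 4) * ψ (k + 4) := by
    have h := hφn; rw [eq_div_iff (hψne (k + 4) (by omega) le_rfl)] at h; linear_combination -h
  have hdn : d (k + 4) = ψ (k + 4) := hψn.symm
  have han1 : a (k + 3) = ρ (k + 3) := hρn1.symm
  have hdn1 : d (k + 3) = ψ (k + 3) + σ (k + 4) * ρ (k + 3) := by linear_combination -hψn1
  have hcn1 : c (k + 3) = σ (k + 3) * ψ (k + 3) + φ (k + 4) * ρ (k + 3) := by
    have h := hσn1
    rw [eq_div_iff (hψne (k + 3) (by omega) (by omega))] at h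
    linear_combination -h
  have hen1 : e (k + 3) = φ (k + 3) * ψ (k + 3) := by
    have h := hφn1
    rw [eq_div_iff (hψne (k + 3) (by omega) (by omega))] at h
    linear_combination -h
  funext i
  show ∑ j, P i j * x ((j : ℕ) + 1) = y ((i : ℕ) + 1)
  simp only [hP]
  rw [band_sum]
  have hilt : (i : ℕ) < k + 4 := i.isLt
  rcases (by omega : (i : ℕ) = 0 ∨ (i : ℕ) = 1 ∨ (2 ≤ (i : ℕ) ∧ (i : ℕ) ≤ k + 1) ∨ (i : ℕ) = k + 2 ∨ (i : ℕ) = k + 3) with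
    h0 | h1 | ⟨hge, hle⟩ | h2 | h3
  · rw [h0]
    rw [if_pos (by omega), if_pos (by omega), if_neg (by omega), if_neg (by omega)]
    norm_num
    rw [hy 1 (by omega) (by omega), ha 1 (by omega) (by omega), hd 1 (by omega) (by omega),
      hw' 3 (by omega) (by omega), hw1, hw2]
    norm_num
    ring
  · rw [h1]
    rw [if_pos (by omega), if_pos (by omega), if_pos (by omega), if_neg (by omega)]
    norm_num
    rw [hy 2 (by omega) (by omega), ha 2 (by omega) (by omega), hd 2 (by omega) (by omega),
      hc 2 (by omega) (by omega), hw' 3 (by omega) (by omega), hw' 4 (by omega) (by omega),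
      hw2]
    norm_num
    ring
  · obtain ⟨t, ht⟩ : ∃ t, (i : ℕ) = t + 2 := ⟨(i : ℕ) - 2, by omega⟩
    rw [ht] at hle ⊢
    rw [if_pos (by omega), if_pos (by omega), if_pos (by omega), if_pos (by omega)]
    simp only [show t + 2 - 1 = t + 1 by omega, show t + 2 + 1 = t + 3 by omega,
      show t + 2 + 2 = t + 4 by omega, show t + 2 + 3 = t + 5 by omega]
    rw [hy (t + 3) (by omega) (by omega), ha (t + 3) (by omega) (by omega),
      hd (t + 3) (by omega) (by omega), hc (t + 3) (by omega) (by omega),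
      he (t + 3) (by omega) (by omega),
      hw' (t + 3) (by omega) (by omega), hw' (t + 4) (by omega) (by omega),
      hw' (t + 5) (by omega) (by omega)]
    simp only [show t + 3 - 1 = t + 2 by omega, show t + 3 - 2 = t + 1 by omega,
      show t + 4 - 1 = t + 3 by omega, show t + 4 - 2 = t + 2 by omega,
      show t + 5 - 1 = t + 4 by omega, show t + 5 - 2 = t + 3 by omega,
      show t + 3 + 2 = t + 5 by omega, show t + 3 + 1 = t + 4 by omega]
    ring
  · rw [h2]
    rw [if_pos (by omega), if_neg (by omega), if_pos (by omega), if_pos (by omega)]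
    simp only [show k + 2 - 1 = k + 1 by omega, show k + 2 + 1 = k + 3 by omega,
      show k + 2 + 2 = k + 4 by omega]
    rw [hyn1, han1, hdn1, hcn1, hen1, hw' (k + 3) (by omega) (by omega),
      hw' (k + 4) (by omega) (by omega)]
    simp only [show k + 3 - 1 = k + 2 by omega, show k + 3 - 2 = k + 1 by omega,
      show k + 4 - 1 = k + 3 by omega, show k + 4 - 2 = k + 2 by omega]
    ring
  · rw [h3]
    rw [if_neg (by omega), if_neg (by omega), if_pos (by omega), if_pos (by omega)]
    simp only [show k + 3 - 1 = k + 2 by omega, show k + 3 + 1 = k + 4 by omega]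
    rw [hyn, hcn, hen, hdn, hw' (k + 4) (by omega) (by omega)]
    simp only [show k + 4 - 1 = k + 3 by omega, show k + 4 - 2 = k + 2 by omega]
    ring
end

section
/- Let n ≥ 4 and let P be the n×n pentadiagonal matrix over a field F with diagonal entries d₁,…,dₙ, first superdiagonal a₁,…,aₙ₋₁, second superdiagonal b₁,…,bₙ₋₂, first subdiagonal c₂,…,cₙ, second subdiagonal e₃,…,eₙ, and all other entries zero. Define μ, α, β, γ by the PTRANS-I recurrences μ₁ = d₁, α₁ = a₁/μ₁, β₁ = b₁/μ₁, γ₂ = c₂, μ₂ = d₂ − α₁γ₂, α₂ = (a₂ − β₁γ₂)/μ₂, β₂ = b₂/μ₂, and for i = 3,…,n: γᵢ = cᵢ − αᵢ₋₂eᵢ, μᵢ = dᵢ − βᵢ₋₂eᵢ − αᵢ₋₁γᵢ, αᵢ = (aᵢ − βᵢ₋₁γᵢ)/μᵢ for i ≤ n−1, βᵢ = bᵢ/μᵢ for i ≤ n−2. If μᵢ ≠ 0 for i = 1,…,n−1, then det(P) = μ₁·μ₂·⋯·μₙ. -/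
open Matrix

theorem stmt_8 {F : Type*} [Field F] (n : ℕ) (hn : 4 ≤ n)
    (d a b c e : ℕ → F)
    (P : Matrix (Fin n) (Fin n) F)
    (hP : ∀ i j : Fin n,
      P i j =
        if (j : ℕ) = (i : ℕ) + 1 then a ((i : ℕ) + 1)
        else if (j : ℕ) = (i : ℕ) + 2 then b ((i : ℕ) + 1)
        else if (i : ℕ) = (j : ℕ) + 1 then c ((i : ℕ) + 1)
        else if (i : ℕ) = (j : ℕ) + 2 then e ((i : ℕ) + 1)
        else if (i : ℕ) = (j : ℕ) then d ((i : ℕ) + 1)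
        else 0)
    (μ α β γ : ℕ → F)
    (hμ1 : μ 1 = d 1) (hα1 : α 1 = a 1 / μ 1) (hβ1 : β 1 = b 1 / μ 1)
    (hγ2 : γ 2 = c 2) (hμ2 : μ 2 = d 2 - α 1 * γ 2)
    (hα2 : α 2 = (a 2 - β 1 * γ 2) / μ 2) (hβ2 : β 2 = b 2 / μ 2)
    (hγ : ∀ i, 3 ≤ i → i ≤ n → γ i = c i - α (i - 2) * e i)
    (hμr : ∀ i, 3 ≤ i → i ≤ n → μ i = d i - β (i - 2) * e i - α (i - 1) * γ i)
    (hαr : ∀ i, 3 ≤ i → i ≤ n - 1 → α i = (a i - β (i - 1) * γ i) / μ i)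
    (hβr : ∀ i, 3 ≤ i → i ≤ n - 2 → β i = b i / μ i)
    (hμne : ∀ i, 1 ≤ i → i ≤ n - 1 → μ i ≠ 0)
    : P.det = ∏ i ∈ Finset.Icc 1 n, μ i := by
  classical
  have hμ1ne : μ 1 ≠ 0 := hμne 1 le_rfl (by omega)
  have hμ2ne : μ 2 ≠ 0 := hμne 2 (by omega) (by omega)
  -- L : lower triangular factor, U : unit upper triangular factor
  set L : Matrix (Fin n) (Fin n) F := fun i k =>
    if (k : ℕ) = (i : ℕ) then μ ((i : ℕ) + 1)
    else if (i : ℕ) = (k : ℕ) + 1 then γ ((i : ℕ) + 1)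
    else if (i : ℕ) = (k : ℕ) + 2 then e ((i : ℕ) + 1)
    else 0 with hL
  set U : Matrix (Fin n) (Fin n) F := fun k j =>
    if (j : ℕ) = (k : ℕ) then 1
    else if (j : ℕ) = (k : ℕ) + 1 then α ((k : ℕ) + 1)
    else if (j : ℕ) = (k : ℕ) + 2 then β ((k : ℕ) + 1)
    else 0 with hU
  have hPLU : P = L * U := by
    ext i j
    rw [hP, Matrix.mul_apply]
    have hi : (i : ℕ) < n := i.isLt
    have hj : (j : ℕ) < n := j.isLt
    set ni := (i : ℕ) with hni
    set nj := (j : ℕ) with hnj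
    set g : ℕ → F := fun m =>
      (if m = ni then μ (ni + 1)
        else if ni = m + 1 then γ (ni + 1)
        else if ni = m + 2 then e (ni + 1)
        else 0) *
      (if nj = m then 1
        else if nj = m + 1 then α (m + 1)
        else if nj = m + 2 then β (m + 1)
        else 0) with hg
    have hsum : ∑ k : Fin n, L i k * U k j = ∑ m ∈ Finset.range n, g m := by
      rw [← Fin.sum_univ_eq_sum_range g n]
    have hsub : Finset.Icc (ni - 2) ni ⊆ Finset.range n := by
      intro m hm
      simp only [Finset.mem_Icc] at hm
      simp only [Finset.mem_range]
      omega
    have hzero : ∀ m ∈ Finset.range n, m ∉ Finset.Icc (ni - 2) ni → g m = 0 := by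
      intro m _ hm
      simp only [Finset.mem_Icc, not_and_or, not_le] at hm
      simp only [hg]
      have h1 : ¬ (m = ni) := by omega
      have h2 : ¬ (ni = m + 1) := by omega
      have h3 : ¬ (ni = m + 2) := by omega
      rw [if_neg h1, if_neg h2, if_neg h3, zero_mul]
    rw [hsum, ← Finset.sum_subset hsub hzero]
    obtain h0 | h1 | hge2 : ni = 0 ∨ ni = 1 ∨ 2 ≤ ni := by omega
    · -- first row
      rw [h0, show (0:ℕ) - 2 = 0 from rfl, Finset.Icc_self, Finset.sum_singleton]
      simp only [hg]
      rw [h0]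
      rcases (by omega : nj = 0 ∨ nj = 1 ∨ nj = 2 ∨ 3 ≤ nj) with h | h | h | h
      · rw [h]; simp +arith +decide; rw [hμ1]
      · rw [h]; simp +arith +decide; rw [hα1]; field_simp
      · rw [h]; simp +arith +decide; rw [hβ1]; field_simp
      · have e1 : ¬ (nj = 0 + 1) := by omega
        have e2 : ¬ (nj = 0 + 2) := by omega
        have e3 : ¬ ((0:ℕ) = nj + 1) := by omega
        have e4 : ¬ ((0:ℕ) = nj + 2) := by omega
        have e5 : ¬ ((0:ℕ) = nj) := by omega
        have e6 : ¬ (nj = 0) := by omega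
        simp only [e1, e2, e3, e4, e5, e6, if_false, if_true, eq_self_iff_true]
        ring
    · -- second row
      rw [h1, show (1:ℕ) - 2 = 0 from rfl,
        show Finset.Icc (0:ℕ) 1 = {0, 1} from rfl,
        Finset.sum_pair (by decide : (0:ℕ) ≠ 1)]
      simp only [hg]
      rw [h1]
      rcases (by omega : nj = 0 ∨ nj = 1 ∨ nj = 2 ∨ nj = 3 ∨ 4 ≤ nj)
        with h | h | h | h | h
      · rw [h]; simp +arith +decide; rw [hγ2]
      · rw [h]; simp +arith +decide; rw [hμ2]; ring
      · rw [h]; simp +arith +decide; rw [hα2]; field_simp; ring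
      · rw [h]; simp +arith +decide; rw [hβ2]; field_simp
      · have e1 : ¬ (nj = 1 + 1) := by omega
        have e2 : ¬ (nj = 1 + 2) := by omega
        have e3 : ¬ ((1:ℕ) = nj + 1) := by omega
        have e4 : ¬ ((1:ℕ) = nj + 2) := by omega
        have e5 : ¬ ((1:ℕ) = nj) := by omega
        have e6 : ¬ (nj = 0) := by omega
        have e7 : ¬ (nj = 0 + 1) := by omega
        have e8 : ¬ (nj = 0 + 2) := by omega
        have e9 : ¬ (nj = 1) := by omega
        simp only [e1, e2, e3, e4, e5, e6, e7, e8, e9, if_false, if_true, eq_self_iff_true]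
        ring
    · -- general row, ni = m0 + 2
      obtain ⟨m0, hm0⟩ : ∃ m0, ni = m0 + 2 := ⟨ni - 2, by omega⟩
      have hγ' : γ (m0 + 3) = c (m0 + 3) - α (m0 + 1) * e (m0 + 3) := by
        have := hγ (m0 + 3) (by omega) (by omega)
        rwa [show m0 + 3 - 2 = m0 + 1 from by omega] at this
      have hμr' : μ (m0 + 3) = d (m0 + 3) - β (m0 + 1) * e (m0 + 3)
          - α (m0 + 2) * γ (m0 + 3) := by
        have := hμr (m0 + 3) (by omega) (by omega)
        rwa [show m0 + 3 - 2 = m0 + 1 from by omega,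
          show m0 + 3 - 1 = m0 + 2 from by omega] at this
      rw [hm0, show m0 + 2 - 2 = m0 from by omega,
        show m0 + 2 = (m0 + 1) + 1 from rfl,
        Finset.sum_Icc_succ_top (by omega), Finset.sum_Icc_succ_top (by omega),
        Finset.Icc_self, Finset.sum_singleton]
      simp only [hg]
      rw [hm0]
      rcases (by omega : nj = m0 ∨ nj = m0 + 1 ∨ nj = m0 + 2 ∨ nj = m0 + 3 ∨
          nj = m0 + 4 ∨ (nj < m0 ∨ m0 + 5 ≤ nj)) with h | h | h | h | h | h
      · rw [h]; simp +arith +decide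
      · rw [h]; simp +arith +decide; rw [hγ']; ring
      · rw [h]; simp +arith +decide; rw [hμr']; ring
      · rw [h]; simp +arith +decide
        have hαr' : α (m0 + 3) = (a (m0 + 3) - β (m0 + 2) * γ (m0 + 3)) / μ (m0 + 3) := by
          have := hαr (m0 + 3) (by omega) (by omega)
          rwa [show m0 + 3 - 1 = m0 + 2 from by omega] at this
        have hμne' : μ (m0 + 3) ≠ 0 := hμne (m0 + 3) (by omega) (by omega)
        rw [hαr']; field_simp; ring
      · rw [h]; simp +arith +decide
        have hβr' : β (m0 + 3) = b (m0 + 3) / μ (m0 + 3) := hβr (m0 + 3) (by omega) (by omega)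
        have hμne' : μ (m0 + 3) ≠ 0 := hμne (m0 + 3) (by omega) (by omega)
        rw [hβr']; field_simp
      · have e1 : ¬ (nj = m0 + 1 + 1 + 1) := by omega
        have e2 : ¬ (nj = m0 + 1 + 1 + 2) := by omega
        have e3 : ¬ (m0 + 1 + 1 = nj + 1) := by omega
        have e4 : ¬ (m0 + 1 + 1 = nj + 2) := by omega
        have e5 : ¬ (m0 + 1 + 1 = nj) := by omega
        have e6 : ¬ (nj = m0) := by omega
        have e7 : ¬ (nj = m0 + 1) := by omega
        have e8 : ¬ (nj = m0 + 2) := by omega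
        have e9 : ¬ (nj = m0 + 1 + 1) := by omega
        have e10 : ¬ (nj = m0 + 1 + 2) := by omega
        have e11 : ¬ (nj = m0 + 1 + 1 + 1) := by omega
        have e12 : ¬ (nj = m0 + 1 + 1 + 2) := by omega
        simp only [e1, e2, e3, e4, e5, e6, e7, e8, e9, e10, e11, e12,
          if_false, if_true, eq_self_iff_true]
        simp +arith +decide
  rw [hPLU, Matrix.det_mul]
  have hdetU : U.det = 1 := by
    rw [Matrix.det_of_upperTriangular (M := U)]
    · refine Finset.prod_eq_one fun k _ => ?_
      simp [hU]
    · intro k j hkj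
      have h : (j : ℕ) < (k : ℕ) := hkj
      simp only [hU]
      rw [if_neg (by omega), if_neg (by omega), if_neg (by omega)]
  have hdetL : L.det = ∏ i ∈ Finset.Icc 1 n, μ i := by
    rw [Matrix.det_of_lowerTriangular L]
    · have h1 : ∀ i : Fin n, L i i = μ ((i : ℕ) + 1) := by
        intro i; simp [hL]
      simp_rw [h1]
      rw [Fin.prod_univ_eq_prod_range (fun m => μ (m + 1)) n]
      rw [show Finset.Icc 1 n = Finset.Ico 1 (n + 1) from by
        rw [Finset.Ico_add_one_right_eq_Icc]]
      rw [Finset.prod_Ico_eq_prod_range]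
      simp [add_comm]
    · intro k j hkj
      have h : (k : ℕ) < (j : ℕ) := hkj
      simp only [hL]
      rw [if_neg (by omega), if_neg (by omega), if_neg (by omega)]
  rw [hdetU, hdetL, mul_one]
end

section
/- Let n ≥ 4 and let P be the n×n pentadiagonal matrix over a field F with diagonal entries d₁,…,dₙ, first superdiagonal a₁,…,aₙ₋₁, second superdiagonal b₁,…,bₙ₋₂, first subdiagonal c₂,…,cₙ, second subdiagonal e₃,…,eₙ, and all other entries zero. Define ψ, σ, φ, ρ by the PTRANS-II recurrences ψₙ = dₙ, σₙ = cₙ/ψₙ, φₙ = eₙ/ψₙ, ρₙ₋₁ = aₙ₋₁, ψₙ₋₁ = dₙ₋₁ − σₙρₙ₋₁, σₙ₋₁ = (cₙ₋₁ − φₙρₙ₋₁)/ψₙ₋₁, φₙ₋₁ = eₙ₋₁/ψₙ₋₁, and for i = n−2 down to 1: ρᵢ = aᵢ − σᵢ₊₂bᵢ, ψᵢ = dᵢ − φᵢ₊₂bᵢ − σᵢ₊₁ρᵢ, σᵢ = (cᵢ − φᵢ₊₁ρᵢ)/ψᵢ for i ≥ 2, φᵢ = eᵢ/ψᵢ for i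 ≥ 3. If ψᵢ ≠ 0 for i = 2,…,n, then det(P) = ψ₁·ψ₂·⋯·ψₙ. -/
open Matrix

section Aux
variable {F : Type*} [Field F]

def lval (σ φ : ℕ → F) (J t : ℕ) : F :=
  if t = J then 1 else if t = J + 1 then σ (t + 1) else if t = J + 2 then φ (t + 1) else 0

def Um (n : ℕ) (ψ ρ b : ℕ → F) : Matrix (Fin n) (Fin n) F :=
  fun i j => if (j : ℕ) = (i : ℕ) then ψ ((i : ℕ) + 1)
    else if (j : ℕ) = (i : ℕ) + 1 then ρ ((i : ℕ) + 1)
    else if (j : ℕ) = (i : ℕ) + 2 then b ((i : ℕ) + 1) else 0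

def Lm (n : ℕ) (σ φ : ℕ → F) : Matrix (Fin n) (Fin n) F :=
  fun i j => lval σ φ (j : ℕ) (i : ℕ)

lemma lval_eq_one (σ φ : ℕ → F) (J t : ℕ) (h : t = J) : lval σ φ J t = 1 := by
  simp [lval, h]

lemma lval_eq_sigma (σ φ : ℕ → F) (J t : ℕ) (h : t = J + 1) : lval σ φ J t = σ (t + 1) := by
  unfold lval; rw [if_neg (by omega), if_pos h]

lemma lval_eq_phi (σ φ : ℕ → F) (J t : ℕ) (h : t = J + 2) : lval σ φ J t = φ (t + 1) := by
  unfold lval; rw [if_neg (by omega), if_neg (by omega), if_pos h]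

lemma lval_eq_zero (σ φ : ℕ → F) (J t : ℕ) (h1 : t ≠ J) (h2 : t ≠ J + 1) (h3 : t ≠ J + 2) :
    lval σ φ J t = 0 := by
  unfold lval; rw [if_neg h1, if_neg h2, if_neg h3]

lemma UL_apply (n : ℕ) (ψ ρ b σ φ : ℕ → F) (i j : Fin n) :
    (Um n ψ ρ b * Lm n σ φ) i j =
      ψ ((i : ℕ) + 1) * lval σ φ (j : ℕ) (i : ℕ)
      + (if (i : ℕ) + 1 < n then ρ ((i : ℕ) + 1) * lval σ φ (j : ℕ) ((i : ℕ) + 1) else 0)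
      + (if (i : ℕ) + 2 < n then b ((i : ℕ) + 1) * lval σ φ (j : ℕ) ((i : ℕ) + 2) else 0) := by
  rw [Matrix.mul_apply]
  have h1 : ∑ k : Fin n, Um n ψ ρ b i k * Lm n σ φ k j =
      ∑ k ∈ Finset.range n,
        ((if k = (i : ℕ) then ψ ((i : ℕ) + 1) * lval σ φ (j : ℕ) k else 0)
        + (if k = (i : ℕ) + 1 then ρ ((i : ℕ) + 1) * lval σ φ (j : ℕ) k else 0)
        + (if k = (i : ℕ) + 2 then b ((i : ℕ) + 1) * lval σ φ (j : ℕ) k else 0)) := by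
    rw [← Fin.sum_univ_eq_sum_range]
    refine Finset.sum_congr rfl fun k _ => ?_
    show (if (k : ℕ) = (i : ℕ) then ψ ((i : ℕ) + 1)
        else if (k : ℕ) = (i : ℕ) + 1 then ρ ((i : ℕ) + 1)
        else if (k : ℕ) = (i : ℕ) + 2 then b ((i : ℕ) + 1) else 0) * lval σ φ (j : ℕ) (k : ℕ) = _
    split_ifs with g1 g2 g3 <;> first | ring1 | (exfalso; omega)
  rw [h1, Finset.sum_add_distrib, Finset.sum_add_distrib,
    Finset.sum_ite_eq', Finset.sum_ite_eq', Finset.sum_ite_eq']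
  simp only [Finset.mem_range]
  rw [if_pos i.isLt]

end Aux

theorem stmt_9 {F : Type*} [Field F] (n : ℕ) (hn : 4 ≤ n)
    (d a b c e : ℕ → F)
    (P : Matrix (Fin n) (Fin n) F)
    (hP : ∀ i j : Fin n,
      P i j =
        if (j : ℕ) = (i : ℕ) + 1 then a ((i : ℕ) + 1)
        else if (j : ℕ) = (i : ℕ) + 2 then b ((i : ℕ) + 1)
        else if (i : ℕ) = (j : ℕ) + 1 then c ((i : ℕ) + 1)
        else if (i : ℕ) = (j : ℕ) + 2 then e ((i : ℕ) + 1)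
        else if (i : ℕ) = (j : ℕ) then d ((i : ℕ) + 1)
        else 0)
    (ψ σ φ ρ : ℕ → F)
    (hψn : ψ n = d n) (hσn : σ n = c n / ψ n) (hφn : φ n = e n / ψ n)
    (hρn1 : ρ (n - 1) = a (n - 1))
    (hψn1 : ψ (n - 1) = d (n - 1) - σ n * ρ (n - 1))
    (hσn1 : σ (n - 1) = (c (n - 1) - φ n * ρ (n - 1)) / ψ (n - 1))
    (hφn1 : φ (n - 1) = e (n - 1) / ψ (n - 1))
    (hρr : ∀ i, 1 ≤ i → i ≤ n - 2 → ρ i = a i - σ (i + 2) * b i)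
    (hψr : ∀ i, 1 ≤ i → i ≤ n - 2 → ψ i = d i - φ (i + 2) * b i - σ (i + 1) * ρ i)
    (hσr : ∀ i, 2 ≤ i → i ≤ n - 2 → σ i = (c i - φ (i + 1) * ρ i) / ψ i)
    (hφr : ∀ i, 3 ≤ i → i ≤ n - 2 → φ i = e i / ψ i)
    (hψne : ∀ i, 2 ≤ i → i ≤ n → ψ i ≠ 0)
    : P.det = ∏ i ∈ Finset.Icc 1 n, ψ i := by
  -- ψ·σ and ψ·φ identities
  have hA : ∀ i, 2 ≤ i → i ≤ n - 1 → ψ i * σ i = c i - φ (i + 1) * ρ i := by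
    intro i h2 h1
    rcases lt_or_eq_of_le h1 with h | h
    · rw [hσr i h2 (by omega), mul_div_cancel₀ _ (hψne i h2 (by omega))]
    · rw [h, hσn1, mul_div_cancel₀ _ (hψne (n-1) (by omega) (by omega)),
        show n - 1 + 1 = n by omega]
  have hB : ψ n * σ n = c n := by
    rw [hσn, mul_div_cancel₀ _ (hψne n (by omega) (by omega))]
  have hC : ∀ i, 3 ≤ i → i ≤ n → ψ i * φ i = e i := by
    intro i h3 h1
    rcases lt_or_eq_of_le h1 with h | h
    · rcases lt_or_eq_of_le (show i ≤ n - 1 by omega) with h' | h'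
      · rw [hφr i h3 (by omega), mul_div_cancel₀ _ (hψne i (by omega) (by omega))]
      · rw [h', hφn1, mul_div_cancel₀ _ (hψne (n-1) (by omega) (by omega))]
    · rw [h, hφn, mul_div_cancel₀ _ (hψne n (by omega) (by omega))]
  have hPUL : P = Um n ψ ρ b * Lm n σ φ := by
    ext i j
    rw [hP, UL_apply]
    have hI : (i : ℕ) < n := i.isLt
    have hJ : (j : ℕ) < n := j.isLt
    by_cases hc1 : (j : ℕ) = (i : ℕ) + 1
    · rw [if_pos hc1,
        lval_eq_zero σ φ (j:ℕ) (i:ℕ) (by omega) (by omega) (by omega),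
        if_pos (show (i:ℕ)+1 < n by omega),
        lval_eq_one σ φ (j:ℕ) ((i:ℕ)+1) (by omega)]
      by_cases hg2 : (i:ℕ)+2 < n
      · rw [if_pos hg2, lval_eq_sigma σ φ (j:ℕ) ((i:ℕ)+2) (by omega),
          hρr ((i:ℕ)+1) (by omega) (by omega),
          show (i:ℕ)+2+1 = (i:ℕ)+1+2 by omega]
        ring
      · rw [if_neg hg2, show (i:ℕ)+1 = n-1 by omega, hρn1]
        ring
    · rw [if_neg hc1]
      by_cases hc2 : (j : ℕ) = (i : ℕ) + 2
      · rw [if_pos hc2,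
          lval_eq_zero σ φ (j:ℕ) (i:ℕ) (by omega) (by omega) (by omega),
          if_pos (show (i:ℕ)+1 < n by omega),
          lval_eq_zero σ φ (j:ℕ) ((i:ℕ)+1) (by omega) (by omega) (by omega),
          if_pos (show (i:ℕ)+2 < n by omega),
          lval_eq_one σ φ (j:ℕ) ((i:ℕ)+2) (by omega)]
        ring
      · rw [if_neg hc2]
        by_cases hc3 : (i : ℕ) = (j : ℕ) + 1
        · rw [if_pos hc3, lval_eq_sigma σ φ (j:ℕ) (i:ℕ) (by omega)]
          have ht3 : (if (i:ℕ)+2 < n then b ((i:ℕ)+1) * lval σ φ (j:ℕ) ((i:ℕ)+2) else 0)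
              = 0 := by
            split_ifs with h
            · rw [lval_eq_zero σ φ (j:ℕ) ((i:ℕ)+2) (by omega) (by omega) (by omega), mul_zero]
            · rfl
          rw [ht3]
          by_cases hg1 : (i:ℕ)+1 < n
          · rw [if_pos hg1, lval_eq_phi σ φ (j:ℕ) ((i:ℕ)+1) (by omega)]
            linear_combination -hA ((i:ℕ)+1) (by omega) (by omega)
          · rw [if_neg hg1, show (i:ℕ)+1 = n by omega]
            linear_combination -hB
        · rw [if_neg hc3]
          by_cases hc4 : (i : ℕ) = (j : ℕ) + 2
          · rw [if_pos hc4, lval_eq_phi σ φ (j:ℕ) (i:ℕ) (by omega)]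
            have ht2 : (if (i:ℕ)+1 < n then ρ ((i:ℕ)+1) * lval σ φ (j:ℕ) ((i:ℕ)+1) else 0)
                = 0 := by
              split_ifs with h
              · rw [lval_eq_zero σ φ (j:ℕ) ((i:ℕ)+1) (by omega) (by omega) (by omega), mul_zero]
              · rfl
            have ht3 : (if (i:ℕ)+2 < n then b ((i:ℕ)+1) * lval σ φ (j:ℕ) ((i:ℕ)+2) else 0)
                = 0 := by
              split_ifs with h
              · rw [lval_eq_zero σ φ (j:ℕ) ((i:ℕ)+2) (by omega) (by omega) (by omega), mul_zero]
              · rfl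
            rw [ht2, ht3]
            linear_combination -hC ((i:ℕ)+1) (by omega) (by omega)
          · rw [if_neg hc4]
            by_cases hc5 : (i : ℕ) = (j : ℕ)
            · rw [if_pos hc5, lval_eq_one σ φ (j:ℕ) (i:ℕ) (by omega)]
              by_cases hg2 : (i:ℕ)+2 < n
              · rw [if_pos (show (i:ℕ)+1 < n by omega),
                  lval_eq_sigma σ φ (j:ℕ) ((i:ℕ)+1) (by omega),
                  if_pos hg2, lval_eq_phi σ φ (j:ℕ) ((i:ℕ)+2) (by omega),
                  hψr ((i:ℕ)+1) (by omega) (by omega),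
                  show (i:ℕ)+2+1 = (i:ℕ)+1+2 from by omega]
                ring
              · by_cases hg1 : (i:ℕ)+1 < n
                · rw [if_pos hg1, lval_eq_sigma σ φ (j:ℕ) ((i:ℕ)+1) (by omega),
                    if_neg hg2, show (i:ℕ)+1 = n-1 by omega,
                    show n-1+1 = n by omega, hψn1]
                  ring
                · rw [if_neg hg1, if_neg hg2, show (i:ℕ)+1 = n by omega, hψn]
                  ring
            · rw [if_neg hc5,
                lval_eq_zero σ φ (j:ℕ) (i:ℕ) (by omega) (by omega) (by omega)]
              have ht2 : (if (i:ℕ)+1 < n then ρ ((i:ℕ)+1) * lval σ φ (j:ℕ) ((i:ℕ)+1) else 0)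
                  = 0 := by
                split_ifs with h
                · rw [lval_eq_zero σ φ (j:ℕ) ((i:ℕ)+1) (by omega) (by omega) (by omega), mul_zero]
                · rfl
              have ht3 : (if (i:ℕ)+2 < n then b ((i:ℕ)+1) * lval σ φ (j:ℕ) ((i:ℕ)+2) else 0)
                  = 0 := by
                split_ifs with h
                · rw [lval_eq_zero σ φ (j:ℕ) ((i:ℕ)+2) (by omega) (by omega) (by omega), mul_zero]
                · rfl
              rw [ht2, ht3]
              ring
  -- determinants
  have hU : (Um n ψ ρ b).BlockTriangular id := by
    intro p q h
    have hpq : (q:ℕ) < (p:ℕ) := h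
    show (if (q:ℕ) = (p:ℕ) then ψ ((p:ℕ)+1)
      else if (q:ℕ) = (p:ℕ)+1 then ρ ((p:ℕ)+1)
      else if (q:ℕ) = (p:ℕ)+2 then b ((p:ℕ)+1) else 0) = 0
    rw [if_neg (by omega), if_neg (by omega), if_neg (by omega)]
  have hL : (Lm n σ φ).BlockTriangular OrderDual.toDual := by
    intro p q h
    have hpq : (p:ℕ) < (q:ℕ) := h
    show lval σ φ (q:ℕ) (p:ℕ) = 0
    exact lval_eq_zero σ φ _ _ (by omega) (by omega) (by omega)
  have hUdet : (Um n ψ ρ b).det = ∏ i : Fin n, ψ ((i:ℕ)+1) := by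
    rw [Matrix.det_of_upperTriangular hU]
    refine Finset.prod_congr rfl fun i _ => ?_
    show (if (i:ℕ) = (i:ℕ) then ψ ((i:ℕ)+1)
      else if (i:ℕ) = (i:ℕ)+1 then ρ ((i:ℕ)+1)
      else if (i:ℕ) = (i:ℕ)+2 then b ((i:ℕ)+1) else 0) = _
    rw [if_pos rfl]
  have hLdet : (Lm n σ φ).det = 1 := by
    rw [Matrix.det_of_lowerTriangular _ hL]
    refine Finset.prod_eq_one fun i _ => ?_
    exact lval_eq_one σ φ _ _ rfl
  rw [hPUL, Matrix.det_mul, hUdet, hLdet, mul_one,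
    Fin.prod_univ_eq_prod_range (fun k => ψ (k+1)) n,
    ← Finset.Ico_add_one_right_eq_Icc, Finset.prod_Ico_eq_prod_range,
    Nat.add_sub_cancel]
  exact Finset.prod_congr rfl fun k _ => by rw [add_comm]
end

section
/- Let n ≥ 4 and let P be the n×n pentadiagonal matrix over a field F with diagonal entries d₁,…,dₙ, first superdiagonal a₁,…,aₙ₋₁, second superdiagonal b₁,…,bₙ₋₂, first subdiagonal c₂,…,cₙ, second subdiagonal e₃,…,eₙ, and all other entries zero, and let P̂ be its backward matrix defined by P̂ᵢⱼ = Pᵢ,ₙ₊₁₋ⱼ. Define μ, α, β, γ by the PTRANS-I recurrences μ₁ = d₁, α₁ = a₁/μ₁, β₁ = b₁/μ₁, γ₂ = c₂, μ₂ = d₂ − α₁γ₂, α₂ = (a₂ − β₁γ₂)/μ₂, β₂ = b₂/μ₂, and for i = 3,…,n: γᵢ = cᵢ − αᵢ₋₂eᵢ, μᵢ = dᵢ − βᵢ₋₂eᵢ − αᵢ₋₁γᵢ, αᵢ = (aᵢ − βᵢ₋₁γᵢ)/μᵢ for i ≤ n−1, βᵢ = bᵢ/μᵢ for i ≤ n−2.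 If μᵢ ≠ 0 for i = 1,…,n−1, then det(P̂) = (−1)^(n(n−1)/2) · μ₁·μ₂·⋯·μₙ. -/
open Matrix

theorem aux_sign_revPerm : ∀ (n : ℕ),
    Equiv.Perm.sign (Fin.revPerm : Equiv.Perm (Fin n)) = (-1) ^ (n * (n - 1) / 2)
  | 0 => by decide
  | 1 => by decide
  | (n+2) => by
    have ih := aux_sign_revPerm n
    classical
    let p : Fin (n+2) → Prop := fun x => 0 < (x : ℕ) ∧ (x : ℕ) < n + 1
    let f : Fin n ≃ Subtype p :=
      { toFun := fun i => ⟨⟨(i : ℕ) + 1, by omega⟩, by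
          constructor <;> simp⟩
        invFun := fun x => ⟨(x.1 : ℕ) - 1, by have := x.2; omega⟩
        left_inv := fun i => by ext; simp
        right_inv := fun x => by
          have := x.2
          ext
          simp only [p] at this ⊢
          omega }
    have hrev : (Fin.revPerm : Equiv.Perm (Fin (n+2))) =
        Equiv.swap 0 (Fin.last (n+1)) * Equiv.Perm.extendDomain Fin.revPerm f := by
      ext x
      rcases eq_or_ne x 0 with rfl | hx0
      · rw [Equiv.Perm.mul_apply,
          Equiv.Perm.extendDomain_apply_not_subtype _ _ (by simp [p])]
        simp [Fin.rev_zero]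
      rcases eq_or_ne x (Fin.last (n+1)) with rfl | hxl
      · rw [Equiv.Perm.mul_apply,
          Equiv.Perm.extendDomain_apply_not_subtype _ _ (by simp [p])]
        simp [Fin.rev_last]
      · have h0 : (x : ℕ) ≠ 0 := fun h => hx0 (Fin.ext (by simpa using h))
        have hl : (x : ℕ) ≠ n + 1 := fun h => hxl (Fin.ext (by simpa using h))
        have hx : (x : ℕ) < n + 2 := x.isLt
        have hpx : p x := ⟨by omega, by omega⟩
        rw [Equiv.Perm.mul_apply, Equiv.Perm.extendDomain_apply_subtype _ f hpx]
        have hval : (f (Fin.revPerm (f.symm ⟨x, hpx⟩)) : Fin (n+2)) =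
            ⟨n + 1 - (x : ℕ), by omega⟩ := by
          ext
          simp [f, Fin.rev]
          omega
        rw [hval, Equiv.swap_apply_of_ne_of_ne (by simp [Fin.ext_iff]; omega)
          (by simp [Fin.ext_iff]; omega)]
        simp only [Fin.revPerm_apply, Fin.ext_iff, Fin.rev]
        omega
    rw [hrev, Equiv.Perm.sign_mul, Equiv.Perm.sign_swap (by simp [Fin.ext_iff]),
      Equiv.Perm.sign_extendDomain, ih]
    have he : 2 ∣ n * (n - 1) := by
      rcases Nat.even_or_odd n with h | h
      · exact Dvd.dvd.mul_right h.two_dvd _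
      · rcases n with _ | m
        · simp
        · have : Even (m + 1 - 1) := by
            simpa using Nat.Odd.sub_odd h odd_one
          exact Dvd.dvd.mul_left this.two_dvd _
    obtain ⟨k, hk⟩ := he
    have h1 : (n+2) * (n+1) = n * (n - 1) + 2 * (2 * n + 1) := by
      rcases n with _ | m
      · simp
      · simp only [Nat.succ_sub_one]
        ring
    have key : (n + 2) * (n + 2 - 1) / 2 = n * (n - 1) / 2 + (2 * n + 1) := by
      have h2 : (n + 2) * (n + 2 - 1) = (n+2) * (n+1) := by norm_num
      rw [h2]
      omega
    rw [key, pow_add]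
    have : ((-1 : ℤˣ)) ^ (2 * n + 1) = -1 := Odd.neg_one_pow ⟨n, by ring⟩
    rw [this, mul_comm]

set_option maxHeartbeats 1000000 in
theorem stmt_10 {F : Type*} [Field F] (n : ℕ) (hn : 4 ≤ n)
    (d a b c e : ℕ → F)
    (P : Matrix (Fin n) (Fin n) F)
    (hP : ∀ i j : Fin n,
      P i j =
        if (j : ℕ) = (i : ℕ) + 1 then a ((i : ℕ) + 1)
        else if (j : ℕ) = (i : ℕ) + 2 then b ((i : ℕ) + 1)
        else if (i : ℕ) = (j : ℕ) + 1 then c ((i : ℕ) + 1)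
        else if (i : ℕ) = (j : ℕ) + 2 then e ((i : ℕ) + 1)
        else if (i : ℕ) = (j : ℕ) then d ((i : ℕ) + 1)
        else 0)
    (Phat : Matrix (Fin n) (Fin n) F)
    (hPhat : ∀ i j : Fin n, Phat i j = P i j.rev)
    (μ α β γ : ℕ → F)
    (hμ1 : μ 1 = d 1) (hα1 : α 1 = a 1 / μ 1) (hβ1 : β 1 = b 1 / μ 1)
    (hγ2 : γ 2 = c 2) (hμ2 : μ 2 = d 2 - α 1 * γ 2)
    (hα2 : α 2 = (a 2 - β 1 * γ 2) / μ 2) (hβ2 : β 2 = b 2 / μ 2)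
    (hγ : ∀ i, 3 ≤ i → i ≤ n → γ i = c i - α (i - 2) * e i)
    (hμr : ∀ i, 3 ≤ i → i ≤ n → μ i = d i - β (i - 2) * e i - α (i - 1) * γ i)
    (hαr : ∀ i, 3 ≤ i → i ≤ n - 1 → α i = (a i - β (i - 1) * γ i) / μ i)
    (hβr : ∀ i, 3 ≤ i → i ≤ n - 2 → β i = b i / μ i)
    (hμne : ∀ i, 1 ≤ i → i ≤ n - 1 → μ i ≠ 0)
    : Phat.det = (-1) ^ (n * (n - 1) / 2) * ∏ i ∈ Finset.Icc 1 n, μ i := by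
  classical
  set L' : ℕ → ℕ → F := fun i k =>
    if i = k then 1 else if i = k + 1 then γ (i+1) / μ i
    else if i = k + 2 then e (i+1) / μ (i-1) else 0 with hL'
  set U' : ℕ → ℕ → F := fun k j =>
    if j = k then μ (k+1) else if j = k+1 then μ (k+1) * α (k+1)
    else if j = k+2 then μ (k+1) * β (k+1) else 0 with hU'
  set L : Matrix (Fin n) (Fin n) F := Matrix.of (fun i k : Fin n => L' i.1 k.1) with hL
  set U : Matrix (Fin n) (Fin n) F := Matrix.of (fun k j : Fin n => U' k.1 j.1) with hU
  -- multiplied forms of the recurrences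
  have hm1 : μ 1 ≠ 0 := hμne 1 (by omega) (by omega)
  have hm2 : μ 2 ≠ 0 := hμne 2 (by omega) (by omega)
  have hα1' : α 1 * μ 1 = a 1 := by rw [hα1, div_mul_cancel₀ _ hm1]
  have hβ1' : β 1 * μ 1 = b 1 := by rw [hβ1, div_mul_cancel₀ _ hm1]
  have hα2' : α 2 * μ 2 = a 2 - β 1 * γ 2 := by rw [hα2, div_mul_cancel₀ _ hm2]
  have hβ2' : β 2 * μ 2 = b 2 := by rw [hβ2, div_mul_cancel₀ _ hm2]
  have hinv1F : μ 1 * (μ 1)⁻¹ = 1 := mul_inv_cancel₀ hm1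
  have hLU : P = L * U := by
    ext i j
    rw [hP, Matrix.mul_apply]
    obtain ⟨ii, hii⟩ := i
    obtain ⟨jj, hjj⟩ := j
    simp only [hL, hU, Matrix.of_apply]
    rw [Fin.sum_univ_eq_sum_range (fun k => L' ii k * U' k jj) n]
    rcases ii with _ | (_ | m)
    · -- ii = 0
      have hsum : ∀ k, L' 0 k * U' k jj = if k = 0 then U' k jj else 0 := by
        intro k
        simp only [hL']
        split_ifs <;> first | omega | ring1 | contradiction
      rw [Finset.sum_congr rfl (fun k _ => hsum k), Finset.sum_ite_eq',
        if_pos (Finset.mem_range.2 (by omega))]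
      simp only [hU']
      split_ifs <;> first | omega | contradiction | skip
      · linear_combination -hα1'
      · linear_combination -hβ1'
      · linear_combination -hμ1
      · rfl
    · -- ii = 1
      have hsum : ∀ k, L' 1 k * U' k jj =
          (if k = 1 then U' k jj else 0) + (if k = 0 then γ 2 / μ 1 * U' k jj else 0) := by
        intro k
        simp only [hL']
        split_ifs <;> first | omega | ring1 | contradiction
      rw [Finset.sum_congr rfl (fun k _ => hsum k), Finset.sum_add_distrib,
        Finset.sum_ite_eq', Finset.sum_ite_eq',
        if_pos (Finset.mem_range.2 (by omega)), if_pos (Finset.mem_range.2 (by omega))]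
      simp only [hU']
      split_ifs <;> first | omega | contradiction | skip
      · linear_combination -hα2' - β 1 * γ 2 * hinv1F
      · linear_combination -hβ2'
      · linear_combination -hγ2 - γ 2 * hinv1F
      · linear_combination -hμ2 - α 1 * γ 2 * hinv1F
      · ring1
    · -- ii = m + 2
      have hA : μ (m+1) ≠ 0 := hμne (m+1) (by omega) (by omega)
      have hB : μ (m+2) ≠ 0 := hμne (m+2) (by omega) (by omega)
      have hinvA : μ (m+1) * (μ (m+1))⁻¹ = 1 := mul_inv_cancel₀ hA
      have hinvB : μ (m+2) * (μ (m+2))⁻¹ = 1 := mul_inv_cancel₀ hB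
      have hγI : γ (m+3) = c (m+3) - α (m+1) * e (m+3) := by
        have h := hγ (m+3) (by omega) (by omega)
        have h2 : m + 3 - 2 = m + 1 := by omega
        rwa [h2] at h
      have hμI : μ (m+3) = d (m+3) - β (m+1) * e (m+3) - α (m+2) * γ (m+3) := by
        have h := hμr (m+3) (by omega) (by omega)
        have h2 : m + 3 - 2 = m + 1 := by omega
        have h3 : m + 3 - 1 = m + 2 := by omega
        rwa [h2, h3] at h
      have hsum : ∀ k, L' (m+2) k * U' k jj =
          (if k = m+2 then U' k jj else 0) +
          ((if k = m+1 then γ (m+3) / μ (m+2) * U' k jj else 0) +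
           (if k = m then e (m+3) / μ (m+1) * U' k jj else 0)) := by
        intro k
        simp only [hL']
        have h3 : m + 2 + 1 = m + 3 := by omega
        have h4 : m + 2 - 1 = m + 1 := by omega
        rw [h3, h4]
        split_ifs <;> first | omega | ring1 | contradiction
      rw [Finset.sum_congr rfl (fun k _ => hsum k), Finset.sum_add_distrib,
        Finset.sum_add_distrib, Finset.sum_ite_eq', Finset.sum_ite_eq',
        Finset.sum_ite_eq',
        if_pos (Finset.mem_range.2 (by omega)), if_pos (Finset.mem_range.2 (by omega)),
        if_pos (Finset.mem_range.2 (by omega))]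
      simp only [hU']
      split_ifs <;> first | omega | contradiction | skip
      · -- jj = m+3 : a
        have hC : μ (m+3) ≠ 0 := hμne (m+3) (by omega) (by omega)
        have hαI : α (m+3) * μ (m+3) = a (m+3) - β (m+2) * γ (m+3) := by
          have h := hαr (m+3) (by omega) (by omega)
          have h2 : m + 3 - 1 = m + 2 := by omega
          rw [h2] at h
          rw [h, div_mul_cancel₀ _ hC]
        linear_combination -hαI - β (m+2) * γ (m+3) * hinvB
      · -- jj = m+4 : b
        have hC : μ (m+3) ≠ 0 := hμne (m+3) (by omega) (by omega)
        have hβI : β (m+3) * μ (m+3) = b (m+3) := by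
          have h := hβr (m+3) (by omega) (by omega)
          rw [h, div_mul_cancel₀ _ hC]
        linear_combination -hβI
      · -- jj = m+1 : c
        linear_combination -hγI - γ (m+3) * hinvB - α (m+1) * e (m+3) * hinvA
      · -- jj = m : e
        linear_combination -(e (m+3)) * hinvA
      · -- jj = m+2 : d
        linear_combination -hμI - α (m+2) * γ (m+3) * hinvB - β (m+1) * e (m+3) * hinvA
      · ring1
  have hdetL : L.det = 1 := by
    rw [Matrix.det_of_lowerTriangular L (by
      intro i j hij
      have hij' : (i : ℕ) < (j : ℕ) := hij
      simp only [hL, Matrix.of_apply, hL']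
      rw [if_neg (by omega), if_neg (by omega), if_neg (by omega)])]
    simp only [hL, Matrix.of_apply, hL']
    simp
  have hdetU : U.det = ∏ i ∈ Finset.Icc 1 n, μ i := by
    rw [Matrix.det_of_upperTriangular (by
      intro i j hij
      have hij' : (j : ℕ) < (i : ℕ) := hij
      simp only [hU, Matrix.of_apply, hU']
      rw [if_neg (by omega), if_neg (by omega), if_neg (by omega)] : U.BlockTriangular id)]
    simp only [hU, Matrix.of_apply, hU', if_pos rfl, eq_self_iff_true, if_true]
    rw [Fin.prod_univ_eq_prod_range (fun k => μ (k+1)) n,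
      show Finset.Icc 1 n = Finset.Ico 1 (n+1) by rw [Finset.Ico_add_one_right_eq_Icc],
      Finset.prod_Ico_eq_prod_range]
    simp [add_comm]
  have hPdet : P.det = ∏ i ∈ Finset.Icc 1 n, μ i := by
    rw [hLU, Matrix.det_mul, hdetL, hdetU, one_mul]
  have hsub : Phat = P.submatrix id Fin.revPerm := by
    ext i j
    rw [hPhat, Matrix.submatrix_apply]
    simp
  rw [hsub, Matrix.det_permute', aux_sign_revPerm n, hPdet]
  push_cast
  ring
end

section
/- Let n ≥ 4 and let P be the n×n pentadiagonal matrix over a field F with diagonal entries d₁,…,dₙ, first superdiagonal a₁,…,aₙ₋₁, second superdiagonal b₁,…,bₙ₋₂, first subdiagonal c₂,…,cₙ, second subdiagonal e₃,…,eₙ, and all other entries zero. Define μ, α, β, γ by the PTRANS-I recurrences μ₁ = d₁, α₁ = a₁/μ₁, β₁ = b₁/μ₁, γ₂ = c₂, μ₂ = d₂ − α₁γ₂, α₂ = (a₂ − β₁γ₂)/μ₂, β₂ = b₂/μ₂, and for i = 3,…,n: γᵢ = cᵢ − αᵢ₋₂eᵢ, μᵢ = dᵢ − βᵢ₋₂eᵢ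 − αᵢ₋₁γᵢ, αᵢ = (aᵢ − βᵢ₋₁γᵢ)/μᵢ for i ≤ n−1, βᵢ = bᵢ/μᵢ for i ≤ n−2. If μᵢ ≠ 0 for all i = 1,…,n, then P is invertible. -/
open Matrix Finset

lemma sum_shift_aux {F : Type*} [Field F] {n : ℕ} (m : ℕ) (c : F) (V : ℕ → F) (i : Fin n) :
    (∑ k : Fin n, if (i : ℕ) = (k : ℕ) + m then c * V (k : ℕ) else 0) =
      if m ≤ (i : ℕ) then c * V ((i : ℕ) - m) else 0 := by
  split
  · next h =>
    rw [Finset.sum_eq_single (⟨(i : ℕ) - m, by omega⟩ : Fin n)]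
    · have hv : ((⟨(i : ℕ) - m, by omega⟩ : Fin n) : ℕ) = (i : ℕ) - m := rfl
      rw [hv, if_pos (by omega)]
    · intro k _ hk
      rw [if_neg]
      intro hc
      exact hk (by apply Fin.ext; simp; omega)
    · simp
  · next h =>
    exact Finset.sum_eq_zero fun k _ => by rw [if_neg]; omega

theorem stmt_12 {F : Type*} [Field F] (n : ℕ) (hn : 4 ≤ n)
    (d a b c e : ℕ → F)
    (P : Matrix (Fin n) (Fin n) F)
    (hP : ∀ i j : Fin n,
      P i j =
        if (j : ℕ) = (i : ℕ) + 1 then a ((i : ℕ) + 1)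
        else if (j : ℕ) = (i : ℕ) + 2 then b ((i : ℕ) + 1)
        else if (i : ℕ) = (j : ℕ) + 1 then c ((i : ℕ) + 1)
        else if (i : ℕ) = (j : ℕ) + 2 then e ((i : ℕ) + 1)
        else if (i : ℕ) = (j : ℕ) then d ((i : ℕ) + 1)
        else 0)
    (μ α β γ : ℕ → F)
    (hμ1 : μ 1 = d 1) (hα1 : α 1 = a 1 / μ 1) (hβ1 : β 1 = b 1 / μ 1)
    (hγ2 : γ 2 = c 2) (hμ2 : μ 2 = d 2 - α 1 * γ 2)
    (hα2 : α 2 = (a 2 - β 1 * γ 2) / μ 2) (hβ2 : β 2 = b 2 / μ 2)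
    (hγ : ∀ i, 3 ≤ i → i ≤ n → γ i = c i - α (i - 2) * e i)
    (hμr : ∀ i, 3 ≤ i → i ≤ n → μ i = d i - β (i - 2) * e i - α (i - 1) * γ i)
    (hαr : ∀ i, 3 ≤ i → i ≤ n - 1 → α i = (a i - β (i - 1) * γ i) / μ i)
    (hβr : ∀ i, 3 ≤ i → i ≤ n - 2 → β i = b i / μ i)
    (hμne : ∀ i, 1 ≤ i → i ≤ n → μ i ≠ 0)
    : IsUnit P := by
  set L : Matrix (Fin n) (Fin n) F := fun i k =>
    if (i : ℕ) = (k : ℕ) + 0 then μ ((i : ℕ) + 1)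
    else if (i : ℕ) = (k : ℕ) + 1 then γ ((i : ℕ) + 1)
    else if (i : ℕ) = (k : ℕ) + 2 then e ((i : ℕ) + 1) else 0 with hL
  set U : Matrix (Fin n) (Fin n) F := fun k j =>
    if (k : ℕ) = (j : ℕ) then 1
    else if (j : ℕ) = (k : ℕ) + 1 then α ((k : ℕ) + 1)
    else if (j : ℕ) = (k : ℕ) + 2 then β ((k : ℕ) + 1) else 0 with hU
  have key : P = L * U := by
    ext i j
    rw [Matrix.mul_apply, hP]
    set V : ℕ → F := fun x =>
      if x = (j : ℕ) then 1
      else if (j : ℕ) = x + 1 then α (x + 1)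
      else if (j : ℕ) = x + 2 then β (x + 1) else 0 with hV
    have hUV : ∀ k : Fin n, U k j = V (k : ℕ) := fun k => rfl
    have hsplit : ∀ k : Fin n, L i k * U k j =
        (if (i : ℕ) = (k : ℕ) + 0 then μ ((i : ℕ) + 1) * U k j else 0)
        + (if (i : ℕ) = (k : ℕ) + 1 then γ ((i : ℕ) + 1) * U k j else 0)
        + (if (i : ℕ) = (k : ℕ) + 2 then e ((i : ℕ) + 1) * U k j else 0) := by
      intro k
      rw [hL]
      dsimp only
      split
      · next h => rw [if_neg (by omega), if_neg (by omega)]; ring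
      · split
        · next h => rw [if_neg (by omega)]; ring
        · split
          · ring_nf
          · ring_nf
    rw [Finset.sum_congr rfl (fun k _ => hsplit k)]
    simp only [hUV]
    rw [Finset.sum_add_distrib, Finset.sum_add_distrib,
      sum_shift_aux 0 (μ ((i : ℕ) + 1)) V i,
      sum_shift_aux 1 (γ ((i : ℕ) + 1)) V i,
      sum_shift_aux 2 (e ((i : ℕ) + 1)) V i,
      if_pos (Nat.zero_le _), Nat.sub_zero]
    have hjn : (j : ℕ) < n := j.isLt
    have hin : (i : ℕ) < n := i.isLt
    by_cases hc1 : (j : ℕ) = (i : ℕ) + 1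
    · -- superdiagonal a
      rw [if_pos hc1]
      have v0 : V ((i : ℕ)) = α ((i : ℕ) + 1) := by
        simp only [hV]; rw [if_neg (by omega), if_pos (by omega)]
      have hμn := hμne ((i : ℕ) + 1) (by omega) (by omega)
      rcases Nat.lt_or_ge (i : ℕ) 1 with h1 | h1
      · have hii : (i : ℕ) = 0 := by omega
        rw [v0, if_neg (by omega), if_neg (by omega), hii]
        rw [hii] at hμn
        norm_num at hμn ⊢
        rw [hα1]
        field_simp
      · have v1 : V ((i : ℕ) - 1) = β ((i : ℕ) - 1 + 1) := by
          simp only [hV]; rw [if_neg (by omega), if_neg (by omega), if_pos (by omega)]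
        rcases Nat.lt_or_ge (i : ℕ) 2 with h2 | h2
        · have hii : (i : ℕ) = 1 := by omega
          rw [v0, if_pos (by omega), v1, if_neg (by omega), hii]
          rw [hii] at hμn
          norm_num at hμn ⊢
          rw [hα2]
          field_simp
          ring
        · have v2 : V ((i : ℕ) - 2) = 0 := by
            simp only [hV]; rw [if_neg (by omega), if_neg (by omega), if_neg (by omega)]
          rw [v0, if_pos (by omega), v1, if_pos h2, v2,
            show (i : ℕ) - 1 + 1 = (i : ℕ) from by omega]
          have hα := hαr ((i : ℕ) + 1) (by omega) (by omega)
          simp only [Nat.add_sub_cancel] at hα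
          rw [hα]
          field_simp
          ring
    · by_cases hc2 : (j : ℕ) = (i : ℕ) + 2
      · -- second superdiagonal b
        rw [if_neg hc1, if_pos hc2]
        have v0 : V ((i : ℕ)) = β ((i : ℕ) + 1) := by
          simp only [hV]; rw [if_neg (by omega), if_neg (by omega), if_pos (by omega)]
        have hμn := hμne ((i : ℕ) + 1) (by omega) (by omega)
        rcases Nat.lt_or_ge (i : ℕ) 1 with h1 | h1
        · have hii : (i : ℕ) = 0 := by omega
          rw [v0, if_neg (by omega), if_neg (by omega), hii]
          rw [hii] at hμn
          norm_num at hμn ⊢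
          rw [hβ1]
          field_simp
        · have v1 : V ((i : ℕ) - 1) = 0 := by
            simp only [hV]; rw [if_neg (by omega), if_neg (by omega), if_neg (by omega)]
          rcases Nat.lt_or_ge (i : ℕ) 2 with h2 | h2
          · have hii : (i : ℕ) = 1 := by omega
            rw [v0, if_pos h1, v1, if_neg (by omega), hii]
            rw [hii] at hμn
            norm_num at hμn ⊢
            rw [hβ2]
            field_simp
          · have v2 : V ((i : ℕ) - 2) = 0 := by
              simp only [hV]; rw [if_neg (by omega), if_neg (by omega), if_neg (by omega)]
            rw [v0, if_pos h1, v1, if_pos h2, v2]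
            have hβ := hβr ((i : ℕ) + 1) (by omega) (by omega)
            rw [hβ]
            field_simp
            ring
      · by_cases hc3 : (i : ℕ) = (j : ℕ) + 1
        · -- subdiagonal c
          rw [if_neg hc1, if_neg hc2, if_pos hc3]
          have v0 : V ((i : ℕ)) = 0 := by
            simp only [hV]; rw [if_neg (by omega), if_neg (by omega), if_neg (by omega)]
          have v1 : V ((i : ℕ) - 1) = 1 := by
            simp only [hV]; rw [if_pos (by omega)]
          rcases Nat.lt_or_ge (i : ℕ) 2 with h2 | h2
          · have hii : (i : ℕ) = 1 := by omega
            rw [v0, if_pos (by omega), v1, if_neg (by omega), hii]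
            norm_num
            exact hγ2.symm
          · have v2 : V ((i : ℕ) - 2) = α ((i : ℕ) - 2 + 1) := by
              simp only [hV]; rw [if_neg (by omega), if_pos (by omega)]
            rw [v0, if_pos (by omega), v1, if_pos h2, v2]
            have hγ' := hγ ((i : ℕ) + 1) (by omega) (by omega)
            rw [show (i : ℕ) + 1 - 2 = (i : ℕ) - 2 + 1 from by omega] at hγ'
            rw [hγ']
            ring
        · by_cases hc4 : (i : ℕ) = (j : ℕ) + 2
          · -- second subdiagonal e
            rw [if_neg hc1, if_neg hc2, if_neg hc3, if_pos hc4]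
            have v0 : V ((i : ℕ)) = 0 := by
              simp only [hV]; rw [if_neg (by omega), if_neg (by omega), if_neg (by omega)]
            have v1 : V ((i : ℕ) - 1) = 0 := by
              simp only [hV]; rw [if_neg (by omega), if_neg (by omega), if_neg (by omega)]
            have v2 : V ((i : ℕ) - 2) = 1 := by
              simp only [hV]; rw [if_pos (by omega)]
            rw [v0, v1, v2, if_pos (by omega), if_pos (by omega)]
            ring
          · by_cases hc5 : (i : ℕ) = (j : ℕ)
            · -- diagonal d
              rw [if_neg hc1, if_neg hc2, if_neg hc3, if_neg hc4, if_pos hc5]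
              have v0 : V ((i : ℕ)) = 1 := by
                simp only [hV]; rw [if_pos (by omega)]
              have hμn := hμne ((i : ℕ) + 1) (by omega) (by omega)
              rcases Nat.lt_or_ge (i : ℕ) 1 with h1 | h1
              · have hii : (i : ℕ) = 0 := by omega
                rw [v0, if_neg (by omega), if_neg (by omega), hii]
                norm_num
                exact hμ1.symm
              · have v1 : V ((i : ℕ) - 1) = α ((i : ℕ) - 1 + 1) := by
                  simp only [hV]; rw [if_neg (by omega), if_pos (by omega)]
                rcases Nat.lt_or_ge (i : ℕ) 2 with h2 | h2
                · have hii : (i : ℕ) = 1 := by omega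
                  rw [v0, if_pos h1, v1, if_neg (by omega), hii]
                  norm_num
                  rw [hμ2]
                  ring
                · have v2 : V ((i : ℕ) - 2) = β ((i : ℕ) - 2 + 1) := by
                    simp only [hV]; rw [if_neg (by omega), if_neg (by omega), if_pos (by omega)]
                  rw [v0, if_pos h1, v1, if_pos h2, v2,
                    show (i : ℕ) - 1 + 1 = (i : ℕ) from by omega]
                  have hμ' := hμr ((i : ℕ) + 1) (by omega) (by omega)
                  rw [show (i : ℕ) + 1 - 2 = (i : ℕ) - 2 + 1 from by omega,
                    show (i : ℕ) + 1 - 1 = (i : ℕ) from by omega] at hμ'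
                  rw [hμ']
                  ring
            · -- zero entries
              rw [if_neg hc1, if_neg hc2, if_neg hc3, if_neg hc4, if_neg hc5]
              have v0 : V ((i : ℕ)) = 0 := by
                simp only [hV]; rw [if_neg (by omega), if_neg (by omega), if_neg (by omega)]
              have v1 : V ((i : ℕ) - 1) = 0 := by
                simp only [hV]; rw [if_neg (by omega), if_neg (by omega), if_neg (by omega)]
              have v2 : V ((i : ℕ) - 2) = 0 := by
                simp only [hV]; rw [if_neg (by omega), if_neg (by omega), if_neg (by omega)]
              rw [v0, v1, v2]
              simp
  rw [key, Matrix.isUnit_iff_isUnit_det, Matrix.det_mul]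
  have hdetL : L.det = ∏ i : Fin n, μ ((i : ℕ) + 1) := by
    rw [Matrix.det_of_lowerTriangular L]
    · apply Finset.prod_congr rfl
      intro i _
      rw [hL]; simp
    · intro i j hij
      have h2 : (i : ℕ) < (j : ℕ) := hij
      rw [hL]
      simp only
      rw [if_neg (by omega), if_neg (by omega), if_neg (by omega)]
  have hdetU : U.det = 1 := by
    rw [Matrix.det_of_upperTriangular]
    · apply Finset.prod_eq_one
      intro i _
      rw [hU]; simp
    · intro i j hij
      have h2 : (j : ℕ) < (i : ℕ) := hij
      rw [hU]
      simp only
      rw [if_neg (by omega), if_neg (by omega), if_neg (by omega)]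
  rw [hdetL, hdetU, mul_one]
  exact isUnit_iff_ne_zero.mpr (Finset.prod_ne_zero_iff.mpr
    (fun i _ => hμne _ (by omega) (by omega)))
end

section
/- Let n ≥ 4 and let P be the n×n pentadiagonal matrix over a field F with diagonal entries d₁,…,dₙ, first superdiagonal a₁,…,aₙ₋₁, second superdiagonal b₁,…,bₙ₋₂, first subdiagonal c₂,…,cₙ, second subdiagonal e₃,…,eₙ, and all other entries zero, and let P̂ be its backward matrix defined by P̂ᵢⱼ = Pᵢ,ₙ₊₁₋ⱼ. Define ψ, σ, φ, ρ by the PTRANS-II recurrences ψₙ = dₙ, σₙ = cₙ/ψₙ, φₙ = eₙ/ψₙ, ρₙ₋₁ = aₙ₋₁, ψₙ₋₁ = dₙ₋₁ − σₙρₙ₋₁, σₙ₋₁ = (cₙ₋₁ − φₙρₙ₋₁)/ψₙ₋₁, φₙ₋₁ = eₙ₋₁/ψₙ₋₁, and for i = n−2 down to 1: ρᵢ = aᵢ − σᵢ₊₂bᵢ, ψᵢ = dᵢ − φᵢ₊₂bᵢ − σᵢ₊₁ρᵢ, σᵢ = (cᵢ − φᵢ₊₁ρᵢ)/ψᵢ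 for i ≥ 2, φᵢ = eᵢ/ψᵢ for i ≥ 3. If ψᵢ ≠ 0 for i = 2,…,n, then det(P̂) = (−1)^(n(n−1)/2) · ψ₁·ψ₂·⋯·ψₙ. -/
open Matrix

private theorem sign_revPerm_aux : ∀ n : ℕ,
    Equiv.Perm.sign (Fin.revPerm : Equiv.Perm (Fin n)) = (-1) ^ (n * (n - 1) / 2)
  | 0 => by
    have : (Fin.revPerm : Equiv.Perm (Fin 0)) = 1 := Subsingleton.elim _ _
    simp [this]
  | (n+1) => by
    have hdec : (Fin.revPerm : Equiv.Perm (Fin (n+1))) =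
        Equiv.Perm.decomposeFin.symm (0, (Fin.revPerm : Equiv.Perm (Fin n))) * finRotate (n+1) := by
      ext x
      refine Fin.lastCases ?_ ?_ x
      · simp [Equiv.Perm.mul_apply, finRotate_last]
      · intro j
        simp only [Equiv.Perm.mul_apply, finRotate_succ_apply, Fin.coeSucc_eq_succ,
          Equiv.Perm.decomposeFin_symm_apply_succ, Equiv.swap_self, Fin.revPerm_apply]
        simp [Fin.rev, Fin.val_succ]
        omega
    rw [hdec, _root_.map_mul, Equiv.Perm.decomposeFin.symm_sign, sign_finRotate,
      sign_revPerm_aux n]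
    have h2 : (n+1) * (n+1-1) / 2 = n * (n-1)/2 + n := Nat.triangle_succ n
    rw [h2, pow_add]
    simp [mul_comm]

private theorem fin_sum_ite {F : Type*} [AddCommMonoid F] {n t : ℕ} (f : Fin n → F) :
    (∑ k : Fin n, if (k : ℕ) = t then f k else 0) =
      if ht : t < n then f ⟨t, ht⟩ else 0 := by
  split
  · next ht =>
    rw [Finset.sum_eq_single_of_mem ⟨t, ht⟩ (Finset.mem_univ _)]
    · simp
    · intro k _ hk
      rw [if_neg]
      simp only [ne_eq, Fin.ext_iff] at hk
      exact hk
  · next ht =>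
    apply Finset.sum_eq_zero
    intro k _
    rw [if_neg]
    intro h
    exact ht (h ▸ k.isLt)

theorem stmt_14 {F : Type*} [Field F] (n : ℕ) (hn : 4 ≤ n)
    (d a b c e : ℕ → F)
    (P : Matrix (Fin n) (Fin n) F)
    (hP : ∀ i j : Fin n,
      P i j =
        if (j : ℕ) = (i : ℕ) + 1 then a ((i : ℕ) + 1)
        else if (j : ℕ) = (i : ℕ) + 2 then b ((i : ℕ) + 1)
        else if (i : ℕ) = (j : ℕ) + 1 then c ((i : ℕ) + 1)
        else if (i : ℕ) = (j : ℕ) + 2 then e ((i : ℕ) + 1)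
        else if (i : ℕ) = (j : ℕ) then d ((i : ℕ) + 1)
        else 0)
    (Phat : Matrix (Fin n) (Fin n) F)
    (hPhat : ∀ i j : Fin n, Phat i j = P i j.rev)
    (ψ σ φ ρ : ℕ → F)
    (hψn : ψ n = d n) (hσn : σ n = c n / ψ n) (hφn : φ n = e n / ψ n)
    (hρn1 : ρ (n - 1) = a (n - 1))
    (hψn1 : ψ (n - 1) = d (n - 1) - σ n * ρ (n - 1))
    (hσn1 : σ (n - 1) = (c (n - 1) - φ n * ρ (n - 1)) / ψ (n - 1))
    (hφn1 : φ (n - 1) = e (n - 1) / ψ (n - 1))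
    (hρr : ∀ i, 1 ≤ i → i ≤ n - 2 → ρ i = a i - σ (i + 2) * b i)
    (hψr : ∀ i, 1 ≤ i → i ≤ n - 2 → ψ i = d i - φ (i + 2) * b i - σ (i + 1) * ρ i)
    (hσr : ∀ i, 2 ≤ i → i ≤ n - 2 → σ i = (c i - φ (i + 1) * ρ i) / ψ i)
    (hφr : ∀ i, 3 ≤ i → i ≤ n - 2 → φ i = e i / ψ i)
    (hψne : ∀ i, 2 ≤ i → i ≤ n → ψ i ≠ 0)
    : Phat.det = (-1) ^ (n * (n - 1) / 2) * ∏ i ∈ Finset.Icc 1 n, ψ i := by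
  -- helper facts
  have heφ : ∀ m, 3 ≤ m → m ≤ n → e m = φ m * ψ m := by
    intro m h3 hmn
    have hne : ψ m ≠ 0 := hψne m (by omega) hmn
    rcases (by omega : m ≤ n - 2 ∨ m = n - 1 ∨ m = n) with h | h | h
    · rw [hφr m h3 h, div_mul_cancel₀ _ hne]
    · subst h; rw [hφn1, div_mul_cancel₀ _ hne]
    · subst h; rw [hφn, div_mul_cancel₀ _ hne]
  have hcσ : ∀ m, 2 ≤ m → m + 1 ≤ n → σ m * ψ m = c m - φ (m + 1) * ρ m := by
    intro m h2 hmn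
    have hne : ψ m ≠ 0 := hψne m h2 (by omega)
    rcases (by omega : m ≤ n - 2 ∨ m = n - 1) with h | h
    · rw [hσr m h2 h, div_mul_cancel₀ _ hne]
    · subst h
      rw [hσn1, div_mul_cancel₀ _ hne, show n - 1 + 1 = n from by omega]
  -- the factors
  set A : Matrix (Fin n) (Fin n) F := Matrix.of fun i j =>
    if (j : ℕ) = (i : ℕ) then 1
    else if (j : ℕ) = (i : ℕ) + 1 then ρ ((i : ℕ) + 1) / ψ ((i : ℕ) + 2)
    else if (j : ℕ) = (i : ℕ) + 2 then b ((i : ℕ) + 1) / ψ ((i : ℕ) + 3)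
    else 0 with hAdef
  set B : Matrix (Fin n) (Fin n) F := Matrix.of fun i j =>
    if (i : ℕ) = (j : ℕ) then ψ ((i : ℕ) + 1)
    else if (i : ℕ) = (j : ℕ) + 1 then σ ((i : ℕ) + 1) * ψ ((i : ℕ) + 1)
    else if (i : ℕ) = (j : ℕ) + 2 then e ((i : ℕ) + 1)
    else 0 with hBdef
  have hA : ∀ x y : Fin n, A x y =
      (if (y : ℕ) = (x : ℕ) then 1
       else if (y : ℕ) = (x : ℕ) + 1 then ρ ((x : ℕ) + 1) / ψ ((x : ℕ) + 2)
       else if (y : ℕ) = (x : ℕ) + 2 then b ((x : ℕ) + 1) / ψ ((x : ℕ) + 3)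
       else 0) := fun _ _ => rfl
  have hB : ∀ x y : Fin n, B x y =
      (if (x : ℕ) = (y : ℕ) then ψ ((x : ℕ) + 1)
       else if (x : ℕ) = (y : ℕ) + 1 then σ ((x : ℕ) + 1) * ψ ((x : ℕ) + 1)
       else if (x : ℕ) = (y : ℕ) + 2 then e ((x : ℕ) + 1)
       else 0) := fun _ _ => rfl
  have hB' : ∀ (x : ℕ) (hx : x < n) (y : Fin n), B ⟨x, hx⟩ y =
      (if x = (y : ℕ) then ψ (x + 1)
       else if x = (y : ℕ) + 1 then σ (x + 1) * ψ (x + 1)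
       else if x = (y : ℕ) + 2 then e (x + 1)
       else 0) := fun _ _ _ => rfl
  -- P = A * B
  have hPAB : P = A * B := by
    ext i j
    rw [Matrix.mul_apply]
    have hterm : ∀ k : Fin n, A i k * B k j =
        (if (k : ℕ) = (i : ℕ) then B k j else 0) +
        ((if (k : ℕ) = (i : ℕ) + 1 then ρ ((i : ℕ) + 1) / ψ ((i : ℕ) + 2) * B k j else 0) +
         (if (k : ℕ) = (i : ℕ) + 2 then b ((i : ℕ) + 1) / ψ ((i : ℕ) + 3) * B k j else 0)) := by
      intro k
      rw [hA]
      split_ifs <;> first | ring1 | (exfalso; omega)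
    rw [Finset.sum_congr rfl fun k _ => hterm k, Finset.sum_add_distrib,
      Finset.sum_add_distrib, fin_sum_ite, fin_sum_ite, fin_sum_ite,
      dif_pos i.isLt]
    simp only [Fin.eta]
    rw [hP i j, hB i j]
    set I := (i : ℕ) with hI
    set J := (j : ℕ) with hJ
    have hIlt : I < n := i.isLt
    have hJlt : J < n := j.isLt
    rcases (by omega : J = I + 1 ∨ J = I + 2 ∨ I = J + 1 ∨ I = J + 2 ∨ I = J ∨
        (J ≠ I + 1 ∧ J ≠ I + 2 ∧ I ≠ J + 1 ∧ I ≠ J + 2 ∧ I ≠ J)) with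
      h | h | h | h | h | ⟨h1, h2, h3, h4, h5⟩
    · -- J = I + 1 : superdiagonal a
      have hn1 : I + 1 < n := by omega
      rw [if_pos h, if_neg (by omega), if_neg (by omega), if_neg (by omega),
        dif_pos hn1]
      have hB1 : B ⟨I + 1, hn1⟩ j = ψ (I + 2) := by
        rw [hB']; split_ifs <;> first | rfl | (exfalso; omega)
      rw [hB1]
      by_cases hn2 : I + 2 < n
      · rw [dif_pos hn2]
        have hB2 : B ⟨I + 2, hn2⟩ j = σ (I + 3) * ψ (I + 3) := by
          rw [hB']; split_ifs <;> first | rfl | (exfalso; omega)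
        rw [hB2, hρr (I + 1) (by omega) (by omega)]
        have e1 : ψ (I + 2) ≠ 0 := hψne _ (by omega) (by omega)
        have e2 : ψ (I + 3) ≠ 0 := hψne _ (by omega) (by omega)
        field_simp
        ring
      · rw [dif_neg hn2]
        have hIn : I + 1 = n - 1 := by omega
        rw [hIn, hρn1]
        have e1 : ψ (I + 2) ≠ 0 := hψne _ (by omega) (by omega)
        rw [div_mul_cancel₀ _ e1]
        ring
    · -- J = I + 2 : second superdiagonal b
      have hn2 : I + 2 < n := by omega
      have hn1 : I + 1 < n := by omega
      rw [if_neg (by omega), if_pos h, if_neg (by omega), if_neg (by omega),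
        if_neg (by omega), dif_pos hn1, dif_pos hn2]
      have hB1 : B ⟨I + 1, hn1⟩ j = 0 := by
        rw [hB']; split_ifs <;> first | rfl | (exfalso; omega)
      have hB2 : B ⟨I + 2, hn2⟩ j = ψ (I + 3) := by
        rw [hB']; split_ifs <;> first | rfl | (exfalso; omega)
      rw [hB1, hB2, mul_zero, div_mul_cancel₀ _ (hψne _ (by omega) (by omega))]
      ring
    · -- I = J + 1 : subdiagonal c
      rw [if_neg (by omega), if_neg (by omega), if_pos h, if_neg (by omega),
        if_pos h]
      by_cases hn1 : I + 1 < n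
      · rw [dif_pos hn1]
        have hB1 : B ⟨I + 1, hn1⟩ j = e (I + 2) := by
          rw [hB']; split_ifs <;> first | rfl | (exfalso; omega)
        rw [hB1, heφ (I + 2) (by omega) (by omega),
          hcσ (I + 1) (by omega) (by omega)]
        have hB2 : (if hh : I + 2 < n then
            b (I + 1) / ψ (I + 3) * B ⟨I + 2, hh⟩ j else 0) = 0 := by
          split
          · next hh =>
            have : B ⟨I + 2, hh⟩ j = 0 := by
              rw [hB']; split_ifs <;> first | rfl | (exfalso; omega)
            rw [this, mul_zero]
          · rfl
        rw [hB2]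
        have e1 : ψ (I + 2) ≠ 0 := hψne _ (by omega) (by omega)
        field_simp
        ring
      · rw [dif_neg hn1, dif_neg (by omega)]
        have hIn : I + 1 = n := by omega
        rw [hIn, hσn, div_mul_cancel₀ _ (hψne n (by omega) le_rfl)]
        ring
    · -- I = J + 2 : second subdiagonal e
      rw [if_neg (by omega), if_neg (by omega), if_neg (by omega), if_pos h,
        if_neg (by omega), if_neg (by omega), if_pos h]
      have hT1 : (if hh : I + 1 < n then
          ρ (I + 1) / ψ (I + 2) * B ⟨I + 1, hh⟩ j else 0) = 0 := by
        split
        · next hh =>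
          have : B ⟨I + 1, hh⟩ j = 0 := by
            rw [hB']; split_ifs <;> first | rfl | (exfalso; omega)
          rw [this, mul_zero]
        · rfl
      have hT2 : (if hh : I + 2 < n then
          b (I + 1) / ψ (I + 3) * B ⟨I + 2, hh⟩ j else 0) = 0 := by
        split
        · next hh =>
          have : B ⟨I + 2, hh⟩ j = 0 := by
            rw [hB']; split_ifs <;> first | rfl | (exfalso; omega)
          rw [this, mul_zero]
        · rfl
      rw [hT1, hT2]
      ring
    · -- I = J : diagonal d
      rw [if_neg (by omega), if_neg (by omega), if_neg (by omega),
        if_neg (by omega), if_pos h, if_pos h]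
      by_cases hn2 : I + 2 < n
      · have hn1 : I + 1 < n := by omega
        rw [dif_pos hn1, dif_pos hn2]
        have hB1 : B ⟨I + 1, hn1⟩ j = σ (I + 2) * ψ (I + 2) := by
          rw [hB']; split_ifs <;> first | rfl | (exfalso; omega)
        have hB2 : B ⟨I + 2, hn2⟩ j = e (I + 3) := by
          rw [hB']; split_ifs <;> first | rfl | (exfalso; omega)
        rw [hB1, hB2, heφ (I + 3) (by omega) (by omega),
          hψr (I + 1) (by omega) (by omega)]
        have e1 : ψ (I + 2) ≠ 0 := hψne _ (by omega) (by omega)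
        have e2 : ψ (I + 3) ≠ 0 := hψne _ (by omega) (by omega)
        field_simp
        ring
      · by_cases hn1 : I + 1 < n
        · rw [dif_pos hn1, dif_neg hn2]
          have hB1 : B ⟨I + 1, hn1⟩ j = σ (I + 2) * ψ (I + 2) := by
            rw [hB']; split_ifs <;> first | rfl | (exfalso; omega)
          rw [hB1]
          have ha1 : I + 1 = n - 1 := by omega
          have ha2 : I + 2 = n := by omega
          rw [ha1, ha2, hψn1]
          have e1 : ψ n ≠ 0 := hψne n (by omega) le_rfl
          field_simp
          ring
        · rw [dif_neg hn1, dif_neg hn2]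
          have ha1 : I + 1 = n := by omega
          rw [ha1, hψn]
          ring
    · -- far from diagonal : zero
      rw [if_neg (by omega), if_neg (by omega), if_neg (by omega),
        if_neg (by omega), if_neg (by omega), if_neg (by omega),
        if_neg (by omega), if_neg (by omega)]
      have hT1 : (if hh : I + 1 < n then
          ρ (I + 1) / ψ (I + 2) * B ⟨I + 1, hh⟩ j else 0) = 0 := by
        split
        · next hh =>
          have : B ⟨I + 1, hh⟩ j = 0 := by
            rw [hB']; split_ifs <;> first | rfl | (exfalso; omega)
          rw [this, mul_zero]
        · rfl
      have hT2 : (if hh : I + 2 < n then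
          b (I + 1) / ψ (I + 3) * B ⟨I + 2, hh⟩ j else 0) = 0 := by
        split
        · next hh =>
          have : B ⟨I + 2, hh⟩ j = 0 := by
            rw [hB']; split_ifs <;> first | rfl | (exfalso; omega)
          rw [this, mul_zero]
        · rfl
      rw [hT1, hT2]
      ring
  -- determinants of the factors
  have hdetA : A.det = 1 := by
    rw [Matrix.det_of_upperTriangular (M := A)]
    · rw [Finset.prod_eq_one]
      intro x _
      rw [hA]
      rw [if_pos rfl]
    · intro x y hxy
      rw [hA]
      have : (y : ℕ) < (x : ℕ) := hxy
      split_ifs <;> first | rfl | omega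
  have hdetB : B.det = ∏ i : Fin n, ψ ((i : ℕ) + 1) := by
    rw [Matrix.det_of_lowerTriangular]
    · apply Finset.prod_congr rfl
      intro x _
      rw [hB, if_pos rfl]
    · intro x y hxy
      rw [hB]
      have : (x : ℕ) < (y : ℕ) := hxy
      split_ifs <;> first | rfl | omega
  have hprod : (∏ i : Fin n, ψ ((i : ℕ) + 1)) = ∏ i ∈ Finset.Icc 1 n, ψ i := by
    rw [← Finset.Ico_add_one_right_eq_Icc, Finset.prod_Ico_eq_prod_range]
    rw [Fin.prod_univ_eq_prod_range (fun i => ψ (i + 1)) n]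
    exact Finset.prod_congr rfl fun x _ => by rw [Nat.add_comm]
  -- reversal
  have hPhat' : Phat = P.submatrix id (Fin.revPerm : Equiv.Perm (Fin n)) := by
    ext i j
    rw [hPhat i j]
    rfl
  rw [hPhat', Matrix.det_permute', hPAB, Matrix.det_mul, hdetA, hdetB, hprod,
    sign_revPerm_aux n]
  push_cast
  ring
end
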